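/- arXiv:1706.09914 — 4 statements merged into one kernel-verified Lean document; each statement's English description precedes it below -/
import Mathlib

section
/- There exists a constant κ ∈ (0,∞), depending only on L and k, such that for every integer n ≥ L, every finitely supported sequence x = (x_m)_{m∈ℕ₀} of nonnegative integers with Σ_{m=0}^∞ x_m = n, and every j ∈ ℕ₀, one has | ζ(j,x) − (n!/(n−L)!) · ζ̄(j, x/n) | ≤ κ · n^{L−2} · x_j, where x/n denotes the sequence (x_m/n)_{m∈ℕ₀} ∈ 𝒮. -/
noncomputable section

open scoped BigOperators

/-- Tail sum `Σ_{m=j+1}^∞ x m` of a finitely supported `ℕ`-valued sequence. -/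
def tailN (x : ℕ → ℕ) (j : ℕ) : ℕ := ∑ᶠ m : ℕ, x (j + 1 + m)

/-- The function `ζ(j, x)` for finitely supported integer sequences `x`. -/
def zetaN (L k : ℕ) (j : ℕ) (x : ℕ → ℕ) : ℕ :=
  ∑ i₁ ∈ Finset.range k, (∑ m ∈ Finset.range j, x m).choose i₁ *
    ∑ i₂ ∈ Finset.Icc 1 (L - i₁),
      (min i₂ (k - i₁)) * (x j).choose i₂ * (tailN x j).choose (L - i₁ - i₂)

/-- Tail sum `Σ_{m=j+1}^∞ r m` of a real sequence. -/
def tsumTail (r : ℕ → ℝ) (j : ℕ) : ℝ := ∑' m : ℕ, r (j + 1 + m)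

/-- The function `ζ̄(j, r)`. -/
def zbar (L k : ℕ) (j : ℕ) (r : ℕ → ℝ) : ℝ :=
  ∑ i₁ ∈ Finset.range k,
    ((∑ m ∈ Finset.range j, r m) ^ i₁ / (i₁.factorial : ℝ)) *
      ∑ i₂ ∈ Finset.Icc 1 (L - i₁),
        (min i₂ (k - i₁) : ℝ) * (r j ^ i₂ / (i₂.factorial : ℝ)) *
          ((tsumTail r j) ^ (L - i₁ - i₂) / ((L - i₁ - i₂).factorial : ℝ))

/-- `m^i ≤ m^(i) + i² m^(i-1)`: the descending factorial approximates the power. -/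
lemma pow_le_descFactorial_add (m : ℕ) : ∀ i : ℕ, 1 ≤ i →
    m ^ i ≤ m.descFactorial i + i ^ 2 * m ^ (i - 1) := by
  intro i
  induction i with
  | zero => omega
  | succ i ih =>
    intro _
    rcases Nat.eq_zero_or_pos i with h0 | h1
    · subst h0; simp [Nat.descFactorial]
    · have ih' := ih h1
      have hiq : m ^ i = m * m ^ (i - 1) := by
        conv_lhs => rw [show i = (i-1) + 1 from by omega]
        rw [pow_succ]; ring
      have key : m * m.descFactorial i ≤ m.descFactorial (i+1) + i * m ^ i := by
        have h2 : m.descFactorial (i+1) = (m - i) * m.descFactorial i :=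
          Nat.descFactorial_succ m i
        have h3 : m * m.descFactorial i ≤ (m - i) * m.descFactorial i + i * m.descFactorial i := by
          have : m ≤ (m - i) + i := by omega
          calc m * m.descFactorial i ≤ ((m - i) + i) * m.descFactorial i :=
                Nat.mul_le_mul_right _ this
            _ = (m - i) * m.descFactorial i + i * m.descFactorial i := by ring
        have h4 : i * m.descFactorial i ≤ i * m ^ i :=
          Nat.mul_le_mul_left _ (Nat.descFactorial_le_pow m i)
        omega
      calc m ^ (i + 1) = m * m ^ i := by rw [pow_succ]; ring
        _ ≤ m * (m.descFactorial i + i ^ 2 * m ^ (i - 1)) := Nat.mul_le_mul_left _ ih'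
        _ = m * m.descFactorial i + i ^ 2 * m ^ i := by rw [hiq]; ring
        _ ≤ m.descFactorial (i+1) + i * m ^ i + i ^ 2 * m ^ i := by omega
        _ ≤ m.descFactorial (i+1) + (i+1) ^ 2 * m ^ (i + 1 - 1) := by
            have : i * m ^ i + i ^ 2 * m ^ i ≤ (i+1)^2 * m ^ i :=
              calc i * m ^ i + i ^ 2 * m ^ i = (i + i^2) * m ^ i := by ring
                _ ≤ (i+1)^2 * m ^ i := Nat.mul_le_mul_right _ (by nlinarith)
            simpa using by omega

lemma cast_df_le_pow (m i : ℕ) : ((m.descFactorial i : ℕ) : ℝ) ≤ (m:ℝ) ^ i := by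
  exact_mod_cast Nat.descFactorial_le_pow m i

lemma gap_le (m i : ℕ) (hi : 1 ≤ i) :
    (m:ℝ) ^ i - (m.descFactorial i : ℝ) ≤ (i:ℝ)^2 * (m:ℝ) ^ (i-1) := by
  have h := pow_le_descFactorial_add m i hi
  have h' : (m:ℝ) ^ i ≤ (m.descFactorial i : ℝ) + (i:ℝ)^2 * (m:ℝ)^(i-1) := by
    exact_mod_cast h
  linarith

/-- The core estimate for a single term, in terms of descending factorials. -/
lemma core_est (L n a b c i₁ i₂ e : ℕ) (hL : 1 ≤ L) (hn : L ≤ n)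
    (habc : a + b + c = n) (hsum : i₁ + i₂ + e = L) (hi₂ : 1 ≤ i₂) :
    |(a.descFactorial i₁ : ℝ) * (b.descFactorial i₂ : ℝ) * (c.descFactorial e : ℝ)
      - (n.descFactorial L : ℝ) * ((a:ℝ)^i₁ * (b:ℝ)^i₂ * (c:ℝ)^e) / (n:ℝ)^L|
      ≤ 4 * (L:ℝ)^2 * (n:ℝ)^(L-2) * (b:ℝ) := by
  have hn1 : (1:ℝ) ≤ (n:ℝ) := by exact_mod_cast le_trans hL hn
  have hnpos : (0:ℝ) < (n:ℝ) := by linarith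
  have ha : (a:ℝ) ≤ n := by exact_mod_cast (by omega : a ≤ n)
  have hb : (b:ℝ) ≤ n := by exact_mod_cast (by omega : b ≤ n)
  have hc : (c:ℝ) ≤ n := by exact_mod_cast (by omega : c ≤ n)
  have hi₁L : i₁ ≤ L := by omega
  have hi₂L : i₂ ≤ L := by omega
  have heL : e ≤ L := by omega
  set A : ℝ := (a.descFactorial i₁ : ℝ) with hA
  set B : ℝ := (b.descFactorial i₂ : ℝ) with hB
  set C : ℝ := (c.descFactorial e : ℝ) with hC
  set Q : ℝ := (a:ℝ)^i₁ * (b:ℝ)^i₂ * (c:ℝ)^e with hQ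
  have hA0 : 0 ≤ A := by positivity
  have hB0 : 0 ≤ B := by positivity
  have hC0 : 0 ≤ C := by positivity
  have hAle : A ≤ (a:ℝ)^i₁ := cast_df_le_pow a i₁
  have hBle : B ≤ (b:ℝ)^i₂ := cast_df_le_pow b i₂
  have hCle : C ≤ (c:ℝ)^e := cast_df_le_pow c e
  have hL2 : ∀ i : ℕ, i ≤ L → ((i:ℝ))^2 ≤ (L:ℝ)^2 := by
    intro i hi
    have h1 : (i:ℝ) ≤ L := by exact_mod_cast hi
    nlinarith [Nat.cast_nonneg (α := ℝ) i]
  have hbpow : (b:ℝ)^i₂ ≤ (b:ℝ) * (n:ℝ)^(i₂-1) := by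
    calc (b:ℝ)^i₂ = (b:ℝ) * (b:ℝ)^(i₂-1) := by
          conv_lhs => rw [show i₂ = (i₂-1)+1 from by omega]
          rw [pow_succ]; ring
      _ ≤ (b:ℝ) * (n:ℝ)^(i₂-1) := by gcongr
  have hP_le_Q : A * B * C ≤ Q := by
    calc A * B * C ≤ (a:ℝ)^i₁ * (b:ℝ)^i₂ * (c:ℝ)^e := by gcongr
      _ = Q := rfl
  -- term 1
  have T1 : ((a:ℝ)^i₁ - A) * ((b:ℝ)^i₂ * (c:ℝ)^e) ≤ (L:ℝ)^2 * (n:ℝ)^(L-2) * b := by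
    rcases Nat.eq_zero_or_pos i₁ with h0 | h1
    · subst h0
      simp only [pow_zero, Nat.descFactorial_zero, hA, Nat.cast_one, sub_self, zero_mul]
      positivity
    · have hexp : (n:ℝ)^(i₁-1) * ((n:ℝ)^(i₂-1) * (n:ℝ)^e) = (n:ℝ)^(L-2) := by
        rw [← pow_add, ← pow_add]; congr 1; omega
      have hgap : (a:ℝ)^i₁ - A ≤ (L:ℝ)^2 * (n:ℝ)^(i₁-1) :=
        calc (a:ℝ)^i₁ - A ≤ (i₁:ℝ)^2 * (a:ℝ)^(i₁-1) := gap_le a i₁ h1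
          _ ≤ (L:ℝ)^2 * (n:ℝ)^(i₁-1) := by
              apply mul_le_mul (hL2 i₁ hi₁L) (by gcongr) (by positivity) (by positivity)
      calc ((a:ℝ)^i₁ - A) * ((b:ℝ)^i₂ * (c:ℝ)^e)
          ≤ ((L:ℝ)^2 * (n:ℝ)^(i₁-1)) * (((b:ℝ) * (n:ℝ)^(i₂-1)) * (n:ℝ)^e) := by
            apply mul_le_mul hgap _ (by positivity) (by positivity)
            apply mul_le_mul hbpow (by gcongr) (by positivity) (by positivity)
        _ = (L:ℝ)^2 * (n:ℝ)^(L-2) * b := by rw [← hexp]; ring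
  -- term 2
  have T2 : A * (((b:ℝ)^i₂ - B) * (c:ℝ)^e) ≤ (L:ℝ)^2 * (n:ℝ)^(L-2) * b := by
    rcases Nat.lt_or_ge i₂ 2 with h0 | h1
    · have h2 : i₂ = 1 := by omega
      subst h2
      simp only [pow_one, hB, Nat.descFactorial_one, sub_self, zero_mul, mul_zero]
      positivity
    · have hexp : (n:ℝ)^(i₁) * (((n:ℝ)^(i₂-2)) * (n:ℝ)^e) = (n:ℝ)^(L-2) := by
        rw [← pow_add, ← pow_add]; congr 1; omega
      have hbpow2 : (b:ℝ)^(i₂-1) ≤ (b:ℝ) * (n:ℝ)^(i₂-2) := by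
        calc (b:ℝ)^(i₂-1) = (b:ℝ) * (b:ℝ)^(i₂-2) := by
              conv_lhs => rw [show i₂-1 = (i₂-2)+1 from by omega]
              rw [pow_succ]; ring
          _ ≤ (b:ℝ) * (n:ℝ)^(i₂-2) := by gcongr
      have hgap : (b:ℝ)^i₂ - B ≤ (L:ℝ)^2 * ((b:ℝ) * (n:ℝ)^(i₂-2)) :=
        calc (b:ℝ)^i₂ - B ≤ (i₂:ℝ)^2 * (b:ℝ)^(i₂-1) := gap_le b i₂ hi₂
          _ ≤ (L:ℝ)^2 * ((b:ℝ) * (n:ℝ)^(i₂-2)) :=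
              mul_le_mul (hL2 i₂ hi₂L) hbpow2 (by positivity) (by positivity)
      calc A * (((b:ℝ)^i₂ - B) * (c:ℝ)^e)
          ≤ (n:ℝ)^i₁ * (((L:ℝ)^2 * ((b:ℝ) * (n:ℝ)^(i₂-2))) * (n:ℝ)^e) := by
            apply mul_le_mul (hAle.trans (by gcongr)) _ _ (by positivity)
            · apply mul_le_mul hgap (by gcongr) (by positivity) (by positivity)
            · have : 0 ≤ (b:ℝ)^i₂ - B := by linarith
              positivity
        _ = (L:ℝ)^2 * (n:ℝ)^(L-2) * b := by rw [← hexp]; ring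
  -- term 3
  have T3 : A * B * ((c:ℝ)^e - C) ≤ (L:ℝ)^2 * (n:ℝ)^(L-2) * b := by
    rcases Nat.eq_zero_or_pos e with h0 | h1
    · subst h0
      simp only [pow_zero, Nat.descFactorial_zero, hC, Nat.cast_one, sub_self, mul_zero]
      positivity
    · have hexp : (n:ℝ)^(i₁) * ((n:ℝ)^(i₂-1) * (n:ℝ)^(e-1)) = (n:ℝ)^(L-2) := by
        rw [← pow_add, ← pow_add]; congr 1; omega
      have hgap : (c:ℝ)^e - C ≤ (L:ℝ)^2 * (n:ℝ)^(e-1) :=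
        calc (c:ℝ)^e - C ≤ (e:ℝ)^2 * (c:ℝ)^(e-1) := gap_le c e h1
          _ ≤ (L:ℝ)^2 * (n:ℝ)^(e-1) := by
              apply mul_le_mul (hL2 e heL) (by gcongr) (by positivity) (by positivity)
      calc A * B * ((c:ℝ)^e - C)
          ≤ ((n:ℝ)^i₁ * ((b:ℝ) * (n:ℝ)^(i₂-1))) * ((L:ℝ)^2 * (n:ℝ)^(e-1)) := by
            apply mul_le_mul _ hgap (by linarith [cast_df_le_pow c e]) (by positivity)
            apply mul_le_mul (hAle.trans (by gcongr)) (hBle.trans hbpow) hB0 (by positivity)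
        _ = (L:ℝ)^2 * (n:ℝ)^(L-2) * b := by rw [← hexp]; ring
  -- Q bounded
  have hQb : Q ≤ (b:ℝ) * (n:ℝ)^(L-1) := by
    have hexp : (n:ℝ)^(i₁) * ((n:ℝ)^(i₂-1) * (n:ℝ)^e) = (n:ℝ)^(L-1) := by
      rw [← pow_add, ← pow_add]; congr 1; omega
    calc Q ≤ (n:ℝ)^i₁ * (((b:ℝ) * (n:ℝ)^(i₂-1)) * (n:ℝ)^e) := by
          rw [hQ, mul_assoc]
          apply mul_le_mul (by gcongr) _ (by positivity) (by positivity)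
          apply mul_le_mul hbpow (by gcongr) (by positivity) (by positivity)
      _ = (b:ℝ) * (n:ℝ)^(L-1) := by rw [← hexp]; ring
  have hdfn : (n:ℝ)^L - (n.descFactorial L : ℝ) ≤ (L:ℝ)^2 * (n:ℝ)^(L-1) := gap_le n L hL
  have hdfn0 : (n.descFactorial L : ℝ) ≤ (n:ℝ)^L := cast_df_le_pow n L
  set R : ℝ := (n.descFactorial L : ℝ) * Q / (n:ℝ)^L with hR
  have hQ0 : 0 ≤ Q := by positivity
  have hR_le_Q : R ≤ Q := by
    rw [hR, div_le_iff₀ (by positivity)]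
    calc (n.descFactorial L : ℝ) * Q ≤ (n:ℝ)^L * Q := by gcongr
      _ = Q * (n:ℝ)^L := by ring
  have hQR : Q - R ≤ (L:ℝ)^2 * (n:ℝ)^(L-2) * b := by
    have heq : Q - R = Q * ((n:ℝ)^L - (n.descFactorial L : ℝ)) / (n:ℝ)^L := by
      rw [hR]; field_simp
    rw [heq, div_le_iff₀ (by positivity)]
    have hpow : (n:ℝ)^(L-1) * (n:ℝ)^(L-1) ≤ (n:ℝ)^(L-2) * (n:ℝ)^L := by
      rw [← pow_add, ← pow_add]
      exact pow_le_pow_right₀ hn1 (by omega)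
    calc Q * ((n:ℝ)^L - (n.descFactorial L : ℝ))
        ≤ ((b:ℝ) * (n:ℝ)^(L-1)) * ((L:ℝ)^2 * (n:ℝ)^(L-1)) := by
          apply mul_le_mul hQb hdfn (by linarith) (by positivity)
      _ = ((L:ℝ)^2 * b) * ((n:ℝ)^(L-1) * (n:ℝ)^(L-1)) := by ring
      _ ≤ ((L:ℝ)^2 * b) * ((n:ℝ)^(L-2) * (n:ℝ)^L) := by gcongr
      _ = (L:ℝ)^2 * (n:ℝ)^(L-2) * b * (n:ℝ)^L := by ring
  have tele : Q - A * B * C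
      = ((a:ℝ)^i₁ - A) * ((b:ℝ)^i₂ * (c:ℝ)^e)
        + A * (((b:ℝ)^i₂ - B) * (c:ℝ)^e)
        + A * B * ((c:ℝ)^e - C) := by rw [hQ]; ring
  have hQP : Q - A * B * C ≤ 3 * ((L:ℝ)^2 * (n:ℝ)^(L-2) * b) := by
    rw [tele]; linarith
  calc |A * B * C - R| ≤ |A * B * C - Q| + |Q - R| := abs_sub_le _ _ _
    _ = (Q - A * B * C) + (Q - R) := by
        rw [abs_sub_comm, abs_of_nonneg (by linarith), abs_of_nonneg (by linarith)]
    _ ≤ 3 * ((L:ℝ)^2 * (n:ℝ)^(L-2) * b) + (L:ℝ)^2 * (n:ℝ)^(L-2) * b := by linarith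
    _ = 4 * (L:ℝ)^2 * (n:ℝ)^(L-2) * b := by ring

lemma cast_choose_eq (a i : ℕ) :
    (a.choose i : ℝ) = (a.descFactorial i : ℝ) / (i.factorial : ℝ) := by
  rw [Nat.descFactorial_eq_factorial_mul_choose]
  push_cast
  rw [mul_comm, mul_div_assoc, div_self (by positivity), mul_one]

lemma term_bound (L k n a b c i₁ i₂ : ℕ) (hL : 1 ≤ L) (hn : L ≤ n)
    (habc : a + b + c = n) (hi₁ : i₁ < k) (hkL : k ≤ L) (h1 : 1 ≤ i₂) (h2 : i₂ ≤ L - i₁) :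
    |((min i₂ (k - i₁) : ℕ) : ℝ) * (a.choose i₁ : ℝ) * (b.choose i₂ : ℝ)
        * (c.choose (L - i₁ - i₂) : ℝ)
      - (n.descFactorial L : ℝ) * (((a:ℝ)/(n:ℝ)) ^ i₁ / (i₁.factorial : ℝ) *
          (((min i₂ (k - i₁) : ℕ) : ℝ) * (((b:ℝ)/(n:ℝ)) ^ i₂ / (i₂.factorial : ℝ)) *
            (((c:ℝ)/(n:ℝ)) ^ (L - i₁ - i₂) / ((L - i₁ - i₂).factorial : ℝ))))|
      ≤ (4 * (k:ℝ) * (L:ℝ)^2) * (n:ℝ)^(L-2) * (b:ℝ) := by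
  set e := L - i₁ - i₂ with he
  have hsum : i₁ + i₂ + e = L := by omega
  have hnpos : (0:ℝ) < n := by
    have : 0 < n := by omega
    exact_mod_cast this
  set μ : ℝ := ((min i₂ (k - i₁) : ℕ) : ℝ) with hμ
  have hμ0 : 0 ≤ μ := by positivity
  have hμk : μ ≤ k := by
    rw [hμ]
    have : min i₂ (k - i₁) ≤ k := le_trans (min_le_right _ _) (by omega)
    exact_mod_cast this
  set F : ℝ := (i₁.factorial : ℝ) * (i₂.factorial : ℝ) * (e.factorial : ℝ) with hF
  have f1 : (1:ℝ) ≤ (i₁.factorial:ℝ) := by exact_mod_cast i₁.factorial_pos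
  have f2 : (1:ℝ) ≤ (i₂.factorial:ℝ) := by exact_mod_cast i₂.factorial_pos
  have f3 : (1:ℝ) ≤ (e.factorial:ℝ) := by exact_mod_cast e.factorial_pos
  have hF1 : (1:ℝ) ≤ F := by
    rw [hF]
    calc (1:ℝ) = 1*1*1 := by ring
      _ ≤ (i₁.factorial : ℝ) * (i₂.factorial : ℝ) * (e.factorial : ℝ) := by
          gcongr <;> linarith
  have hF0 : (0:ℝ) < F := by linarith
  have hnL : (n:ℝ)^i₁ * (n:ℝ)^i₂ * (n:ℝ)^e = (n:ℝ)^L := by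
    rw [← pow_add, ← pow_add, hsum]
  have hD : μ * (a.choose i₁ : ℝ) * (b.choose i₂ : ℝ) * (c.choose e : ℝ)
      - (n.descFactorial L : ℝ) * (((a:ℝ)/(n:ℝ)) ^ i₁ / (i₁.factorial : ℝ) *
          (μ * (((b:ℝ)/(n:ℝ)) ^ i₂ / (i₂.factorial : ℝ)) *
            (((c:ℝ)/(n:ℝ)) ^ e / (e.factorial : ℝ))))
      = μ / F * ((a.descFactorial i₁ : ℝ) * (b.descFactorial i₂ : ℝ) * (c.descFactorial e : ℝ)
          - (n.descFactorial L : ℝ) * ((a:ℝ)^i₁ * (b:ℝ)^i₂ * (c:ℝ)^e) / (n:ℝ)^L) := by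
    rw [cast_choose_eq a i₁, cast_choose_eq b i₂, cast_choose_eq c e,
      div_pow, div_pow, div_pow, ← hnL, hF]
    have h₁ : (i₁.factorial : ℝ) ≠ 0 := by positivity
    have h₂ : (i₂.factorial : ℝ) ≠ 0 := by positivity
    have h₃ : (e.factorial : ℝ) ≠ 0 := by positivity
    have h₄ : (n:ℝ) ≠ 0 := ne_of_gt hnpos
    field_simp
  rw [hD, abs_mul, abs_of_nonneg (by positivity)]
  have hcore := core_est L n a b c i₁ i₂ e hL hn habc hsum h1
  calc μ / F * |(a.descFactorial i₁ : ℝ) * (b.descFactorial i₂ : ℝ) * (c.descFactorial e : ℝ)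
          - (n.descFactorial L : ℝ) * ((a:ℝ)^i₁ * (b:ℝ)^i₂ * (c:ℝ)^e) / (n:ℝ)^L|
      ≤ (k:ℝ) * (4 * (L:ℝ)^2 * (n:ℝ)^(L-2) * (b:ℝ)) := by
        apply mul_le_mul _ hcore (abs_nonneg _) (by positivity)
        exact le_trans (div_le_self hμ0 hF1) hμk
    _ = (4 * (k:ℝ) * (L:ℝ)^2) * (n:ℝ)^(L-2) * (b:ℝ) := by ring

lemma main_est (L k n a b c : ℕ) (hL : 1 ≤ L) (hk : 1 ≤ k) (hkL : k ≤ L)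
    (hn : L ≤ n) (habc : a + b + c = n) :
    |((∑ i₁ ∈ Finset.range k, a.choose i₁ *
          ∑ i₂ ∈ Finset.Icc 1 (L - i₁),
            min i₂ (k - i₁) * b.choose i₂ * c.choose (L - i₁ - i₂) : ℕ) : ℝ)
      - (n.descFactorial L : ℝ) *
          ∑ i₁ ∈ Finset.range k,
            (((a:ℝ)/(n:ℝ)) ^ i₁ / (i₁.factorial : ℝ)) *
              ∑ i₂ ∈ Finset.Icc 1 (L - i₁),
                (min i₂ (k - i₁) : ℝ) * (((b:ℝ)/(n:ℝ)) ^ i₂ / (i₂.factorial : ℝ)) *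
                  (((c:ℝ)/(n:ℝ)) ^ (L - i₁ - i₂) / ((L - i₁ - i₂).factorial : ℝ))|
      ≤ (4*(k:ℝ)^2*(L:ℝ)^3 + 1) * (n:ℝ)^(L-2) * (b:ℝ) := by
  set K : ℝ := (4 * (k:ℝ) * (L:ℝ)^2) * (n:ℝ)^(L-2) * (b:ℝ) with hK
  have hK0 : 0 ≤ K := by positivity
  have key : ((∑ i₁ ∈ Finset.range k, a.choose i₁ *
          ∑ i₂ ∈ Finset.Icc 1 (L - i₁),
            min i₂ (k - i₁) * b.choose i₂ * c.choose (L - i₁ - i₂) : ℕ) : ℝ)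
      - (n.descFactorial L : ℝ) *
          ∑ i₁ ∈ Finset.range k,
            (((a:ℝ)/(n:ℝ)) ^ i₁ / (i₁.factorial : ℝ)) *
              ∑ i₂ ∈ Finset.Icc 1 (L - i₁),
                (min i₂ (k - i₁) : ℝ) * (((b:ℝ)/(n:ℝ)) ^ i₂ / (i₂.factorial : ℝ)) *
                  (((c:ℝ)/(n:ℝ)) ^ (L - i₁ - i₂) / ((L - i₁ - i₂).factorial : ℝ))
      = ∑ i₁ ∈ Finset.range k, ∑ i₂ ∈ Finset.Icc 1 (L - i₁),
          (((min i₂ (k - i₁) : ℕ) : ℝ) * (a.choose i₁ : ℝ) * (b.choose i₂ : ℝ)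
              * (c.choose (L - i₁ - i₂) : ℝ)
            - (n.descFactorial L : ℝ) * (((a:ℝ)/(n:ℝ)) ^ i₁ / (i₁.factorial : ℝ) *
                (((min i₂ (k - i₁) : ℕ) : ℝ) * (((b:ℝ)/(n:ℝ)) ^ i₂ / (i₂.factorial : ℝ)) *
                  (((c:ℝ)/(n:ℝ)) ^ (L - i₁ - i₂) / ((L - i₁ - i₂).factorial : ℝ))))) := by
    push_cast [-Nat.cast_min]
    rw [Finset.mul_sum, ← Finset.sum_sub_distrib]
    apply Finset.sum_congr rfl
    intro i₁ hi₁
    have hi₁k : i₁ ≤ k := le_of_lt (Finset.mem_range.mp hi₁)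
    rw [Finset.mul_sum, Finset.mul_sum, Finset.mul_sum, ← Finset.sum_sub_distrib]
    apply Finset.sum_congr rfl
    intro i₂ hi₂
    have hμeq : ((min i₂ (k - i₁) : ℕ) : ℝ) = (min i₂ (k - i₁) : ℝ) := by
      push_cast [Nat.cast_min, hi₁k]; rfl
    rw [← hμeq]
    ring
  rw [key]
  calc |∑ i₁ ∈ Finset.range k, ∑ i₂ ∈ Finset.Icc 1 (L - i₁), _|
      ≤ ∑ i₁ ∈ Finset.range k, |∑ i₂ ∈ Finset.Icc 1 (L - i₁), _| :=
        Finset.abs_sum_le_sum_abs _ _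
    _ ≤ ∑ i₁ ∈ Finset.range k, ∑ i₂ ∈ Finset.Icc 1 (L - i₁), K := by
        apply Finset.sum_le_sum
        intro i₁ hi₁
        refine le_trans (Finset.abs_sum_le_sum_abs _ _) ?_
        apply Finset.sum_le_sum
        intro i₂ hi₂
        have h12 := Finset.mem_Icc.mp hi₂
        exact term_bound L k n a b c i₁ i₂ hL hn habc (Finset.mem_range.mp hi₁) hkL h12.1 h12.2
    _ ≤ ∑ i₁ ∈ Finset.range k, (L:ℝ) * K := by
        apply Finset.sum_le_sum
        intro i₁ hi₁
        rw [Finset.sum_const, Nat.card_Icc, nsmul_eq_mul]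
        apply mul_le_mul_of_nonneg_right _ hK0
        have : (L - i₁ + 1 - 1 : ℕ) ≤ L := by omega
        exact_mod_cast this
    _ = (k:ℝ) * ((L:ℝ) * K) := by rw [Finset.sum_const, Finset.card_range, nsmul_eq_mul]
    _ ≤ (4*(k:ℝ)^2*(L:ℝ)^3 + 1) * (n:ℝ)^(L-2) * (b:ℝ) := by
        rw [hK]
        have h1 : (0:ℝ) ≤ (n:ℝ)^(L-2) * b := by positivity
        nlinarith [h1]

/-- there is `κ ∈ (0,∞)`, depending only on `L` and `k`, such that for every
`n ≥ L`, every finitely supported `x : ℕ → ℕ` with `Σ_m x_m = n`, and every `j`,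
`|ζ(j,x) − (n!/(n−L)!)·ζ̄(j, x/n)| ≤ κ·n^{L−2}·x_j`. -/
theorem zetaN_approx_zbar (L k : ℕ) (hL : 1 ≤ L) (hk : 1 ≤ k) (hkL : k ≤ L) :
    ∃ κ : ℝ, 0 < κ ∧ ∀ (n : ℕ), L ≤ n → ∀ x : ℕ → ℕ, (Function.support x).Finite →
      (∑ᶠ m : ℕ, x m) = n → ∀ j : ℕ,
      |(zetaN L k j x : ℝ)
          - (n.descFactorial L : ℝ) * zbar L k j (fun m => (x m : ℝ) / (n : ℝ))|
        ≤ κ * (n : ℝ) ^ (L - 2) * (x j : ℝ) := by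
  refine ⟨4*(k:ℝ)^2*(L:ℝ)^3 + 1, by positivity, ?_⟩
  intro n hn x hx hsum j
  obtain ⟨N, hN⟩ : ∃ N : ℕ, ∀ m, N ≤ m → x m = 0 := by
    obtain ⟨N, hN⟩ := hx.bddAbove
    refine ⟨N+1, fun m hm => ?_⟩
    by_contra h
    exact absurd (hN (Function.mem_support.mpr h)) (by omega)
  have hc : tailN x j = ∑ m ∈ Finset.range N, x (j+1+m) := by
    apply finsum_eq_sum_of_support_subset
    intro m hm
    simp only [Function.mem_support] at hm
    simp only [Finset.coe_range, Set.mem_Iio]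
    by_contra h
    exact hm (hN _ (by omega))
  have habc : (∑ m ∈ Finset.range j, x m) + x j + tailN x j = n := by
    have h1 : (∑ᶠ m : ℕ, x m) = ∑ m ∈ Finset.range (j+1+N), x m := by
      apply finsum_eq_sum_of_support_subset
      intro m hm
      simp only [Function.mem_support] at hm
      simp only [Finset.coe_range, Set.mem_Iio]
      by_contra h
      exact hm (hN _ (by omega))
    rw [h1] at hsum
    rw [← hsum, hc]
    rw [← Finset.sum_range_add_sum_Ico x (by omega : j+1 ≤ j+1+N), Finset.sum_range_succ]
    rw [Finset.sum_Ico_eq_sum_range, show j+1+N-(j+1) = N from by omega]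
  have hnpos : 0 < n := by omega
  have hn0 : (n:ℝ) ≠ 0 := by positivity
  have hr1 : ∑ m ∈ Finset.range j, ((x m : ℝ)/(n:ℝ))
      = ((∑ m ∈ Finset.range j, x m : ℕ) : ℝ)/(n:ℝ) := by
    rw [← Finset.sum_div, Nat.cast_sum]
  have hr2 : tsumTail (fun m => (x m : ℝ)/(n:ℝ)) j = ((tailN x j : ℕ) : ℝ)/(n:ℝ) := by
    unfold tsumTail
    rw [tsum_eq_sum (s := Finset.range N) (fun m hm => ?_)]
    · rw [hc, ← Finset.sum_div, Nat.cast_sum]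
    · have hz : x (j+1+m) = 0 := by
        apply hN
        simp only [Finset.mem_range, not_lt] at hm
        omega
      simp [hz]
  have hzb : zbar L k j (fun m => (x m : ℝ)/(n:ℝ))
      = ∑ i₁ ∈ Finset.range k,
          ((((∑ m ∈ Finset.range j, x m : ℕ) : ℝ)/(n:ℝ)) ^ i₁ / (i₁.factorial : ℝ)) *
            ∑ i₂ ∈ Finset.Icc 1 (L - i₁),
              (min i₂ (k - i₁) : ℝ) * ((((x j : ℕ) : ℝ)/(n:ℝ)) ^ i₂ / (i₂.factorial : ℝ)) *
                ((((tailN x j : ℕ) : ℝ)/(n:ℝ)) ^ (L - i₁ - i₂) / ((L - i₁ - i₂).factorial : ℝ)) := by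
    simp only [zbar]
    rw [hr1, hr2]
  rw [hzb]
  exact main_est L k n (∑ m ∈ Finset.range j, x m) (x j) (tailN x j) hL hk hkL hn habc
end
end

section
/- There exists a constant c_Z ∈ (0,∞), depending only on L and k, such that for every n ∈ ℕ, every finitely supported sequence x = (x_m)_{m∈ℕ₀} of nonnegative integers with Σ_{m=0}^∞ x_m = n, and every j ∈ ℕ₀, one has Z(j,x) ≤ c_Z · n^{L−1} · (x_{j−1} + x_j). -/
noncomputable section

open scoped BigOperators

/-- `prevN x j = x_{j−1}` with the convention `x_{−1} = 0`. -/
def prevN (x : ℕ → ℕ) : ℕ → ℕ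
  | 0 => 0
  | (j + 1) => x j

/-- The quadratic-variation rate function `Z(j, x)` (diagonal case). -/
def Zdiag (L k : ℕ) (j : ℕ) (x : ℕ → ℕ) : ℝ :=
  ∑ i₁ ∈ Finset.range k, ((∑ m ∈ Finset.range (j - 1), x m).choose i₁ : ℝ) *
    ∑ i₂ ∈ Finset.range (L - i₁ + 1), ((prevN x j).choose i₂ : ℝ) *
      ∑ i₃ ∈ Finset.range (L - i₁ - i₂ + 1),
        ((min i₂ (k - i₁) : ℝ) - (min i₃ (k - i₁ - i₂) : ℝ)) ^ 2 *
          ((x j).choose i₃ : ℝ) * ((tailN x j).choose (L - i₁ - i₂ - i₃) : ℝ)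

lemma sum_le_finsum_nat (x : ℕ → ℕ) (hf : (Function.support x).Finite) (s : Finset ℕ) :
    ∑ m ∈ s, x m ≤ ∑ᶠ m, x m := by
  rw [finsum_eq_sum x hf]
  calc ∑ m ∈ s, x m ≤ ∑ m ∈ s ∪ hf.toFinset, x m :=
        Finset.sum_le_sum_of_subset Finset.subset_union_left
    _ = ∑ m ∈ hf.toFinset, x m := by
        refine (Finset.sum_subset Finset.subset_union_right (fun a _ ha => ?_)).symm
        simpa [Set.Finite.mem_toFinset, Function.mem_support, not_not] using ha

lemma tailN_le (x : ℕ → ℕ) (hf : (Function.support x).Finite) (j : ℕ) :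
    tailN x j ≤ ∑ᶠ m, x m := by
  have hg : (Function.support fun m => x (j + 1 + m)).Finite := by
    have he : (Function.support fun m => x (j + 1 + m))
        = (fun m => j + 1 + m) ⁻¹' Function.support x := rfl
    rw [he]
    exact hf.preimage (Set.injOn_of_injective (fun a b h => by omega))
  rw [tailN, finsum_eq_sum _ hg]
  have himg : ∑ m ∈ hg.toFinset.image (fun m => j + 1 + m), x m
      = ∑ a ∈ hg.toFinset, x (j + 1 + a) :=
    Finset.sum_image (fun a _ b _ h => by omega)
  rw [← himg]
  exact sum_le_finsum_nat x hf _

lemma prod_choose_le (n A B C T L i₁ i₂ i₃ : ℕ)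
    (hA : A ≤ n) (hB : B ≤ n) (hC : C ≤ n) (hT : T ≤ n)
    (hs : i₁ + i₂ + i₃ ≤ L) (h : 1 ≤ i₂ ∨ 1 ≤ i₃) :
    A.choose i₁ * B.choose i₂ * (C.choose i₃ * T.choose (L - i₁ - i₂ - i₃))
      ≤ (B + C) * n ^ (L - 1) := by
  have cA : A.choose i₁ ≤ n ^ i₁ :=
    le_trans (Nat.choose_le_pow A i₁) (Nat.pow_le_pow_left hA _)
  have cB : B.choose i₂ ≤ n ^ i₂ :=
    le_trans (Nat.choose_le_pow B i₂) (Nat.pow_le_pow_left hB _)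
  have cC : C.choose i₃ ≤ n ^ i₃ :=
    le_trans (Nat.choose_le_pow C i₃) (Nat.pow_le_pow_left hC _)
  have cT : T.choose (L - i₁ - i₂ - i₃) ≤ n ^ (L - i₁ - i₂ - i₃) :=
    le_trans (Nat.choose_le_pow T _) (Nat.pow_le_pow_left hT _)
  rcases h with h | h
  · -- use the B factor
    have cB' : B.choose i₂ ≤ B * n ^ (i₂ - 1) := by
      calc B.choose i₂ ≤ B ^ i₂ := Nat.choose_le_pow B i₂
        _ = B * B ^ (i₂ - 1) := by
            conv_lhs => rw [show i₂ = 1 + (i₂ - 1) by omega]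
            rw [pow_add, pow_one]
        _ ≤ B * n ^ (i₂ - 1) := Nat.mul_le_mul_left _ (Nat.pow_le_pow_left hB _)
    calc A.choose i₁ * B.choose i₂ * (C.choose i₃ * T.choose (L - i₁ - i₂ - i₃))
        ≤ n ^ i₁ * (B * n ^ (i₂ - 1)) * (n ^ i₃ * n ^ (L - i₁ - i₂ - i₃)) :=
          Nat.mul_le_mul (Nat.mul_le_mul cA cB') (Nat.mul_le_mul cC cT)
      _ = B * n ^ (i₁ + (i₂ - 1) + i₃ + (L - i₁ - i₂ - i₃)) := by
          simp [pow_add]; ring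
      _ = B * n ^ (L - 1) := by
          rw [show i₁ + (i₂ - 1) + i₃ + (L - i₁ - i₂ - i₃) = L - 1 from by omega]
      _ ≤ (B + C) * n ^ (L - 1) := Nat.mul_le_mul_right _ (Nat.le_add_right _ _)
  · -- use the C factor
    have cC' : C.choose i₃ ≤ C * n ^ (i₃ - 1) := by
      calc C.choose i₃ ≤ C ^ i₃ := Nat.choose_le_pow C i₃
        _ = C * C ^ (i₃ - 1) := by
            conv_lhs => rw [show i₃ = 1 + (i₃ - 1) by omega]
            rw [pow_add, pow_one]
        _ ≤ C * n ^ (i₃ - 1) := Nat.mul_le_mul_left _ (Nat.pow_le_pow_left hC _)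
    calc A.choose i₁ * B.choose i₂ * (C.choose i₃ * T.choose (L - i₁ - i₂ - i₃))
        ≤ n ^ i₁ * n ^ i₂ * (C * n ^ (i₃ - 1) * n ^ (L - i₁ - i₂ - i₃)) :=
          Nat.mul_le_mul (Nat.mul_le_mul cA cB) (Nat.mul_le_mul cC' cT)
      _ = C * n ^ (i₁ + i₂ + (i₃ - 1) + (L - i₁ - i₂ - i₃)) := by
          simp [pow_add]; ring
      _ = C * n ^ (L - 1) := by
          rw [show i₁ + i₂ + (i₃ - 1) + (L - i₁ - i₂ - i₃) = L - 1 from by omega]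
      _ ≤ (B + C) * n ^ (L - 1) := Nat.mul_le_mul_right _ (Nat.le_add_left _ _)

/-- there is `c_Z ∈ (0,∞)`, depending only on `L` and `k`, such that for
every `n`, every finitely supported `x : ℕ → ℕ` with `Σ_m x_m = n`, and every `j`,
`Z(j,x) ≤ c_Z · n^{L−1} · (x_{j−1} + x_j)`. -/
theorem Zdiag_bound (L k : ℕ) (hL : 1 ≤ L) (hk : 1 ≤ k) (hkL : k ≤ L) :
    ∃ c : ℝ, 0 < c ∧ ∀ (n : ℕ) (x : ℕ → ℕ), (Function.support x).Finite →
      (∑ᶠ m : ℕ, x m) = n → ∀ j : ℕ,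
      Zdiag L k j x ≤ c * (n : ℝ) ^ (L - 1) * ((prevN x j : ℝ) + (x j : ℝ)) := by
  refine ⟨(k : ℝ) * (L + 1) * (L + 1) * (2 * (L : ℝ)) ^ 2 + 1, by positivity, ?_⟩
  intro n x hf hsum j
  set A : ℕ := ∑ m ∈ Finset.range (j - 1), x m with hAdef
  set B : ℕ := prevN x j with hBdef
  set C : ℕ := x j with hCdef
  set T : ℕ := tailN x j with hTdef
  have hA : A ≤ n := hsum ▸ sum_le_finsum_nat x hf _
  have hC : C ≤ n := by
    have := sum_le_finsum_nat x hf {j}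
    simpa [hsum] using this
  have hB : B ≤ n := by
    cases j with
    | zero => simp [hBdef, prevN]
    | succ m =>
      have := sum_le_finsum_nat x hf {m}
      simpa [hBdef, prevN, hsum] using this
  have hT : T ≤ n := hsum ▸ tailN_le x hf j
  set M : ℝ := (2 * (L : ℝ)) ^ 2 * (n : ℝ) ^ (L - 1) * ((B : ℝ) + (C : ℝ)) with hMdef
  have hM0 : 0 ≤ M := by positivity
  -- per-term bound
  have hterm : ∀ i₁ ∈ Finset.range k, ∀ i₂ ∈ Finset.range (L - i₁ + 1),
      ∀ i₃ ∈ Finset.range (L - i₁ - i₂ + 1),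
      ((A.choose i₁ : ℝ)) * (((B.choose i₂ : ℝ)) *
        (((min i₂ (k - i₁) : ℝ) - (min i₃ (k - i₁ - i₂) : ℝ)) ^ 2 *
          ((C.choose i₃ : ℝ)) * ((T.choose (L - i₁ - i₂ - i₃) : ℝ)))) ≤ M := by
    intro i₁ h1 i₂ h2 i₃ h3
    rw [Finset.mem_range] at h1 h2 h3
    by_cases hz : i₂ = 0 ∧ i₃ = 0
    · obtain ⟨rfl, rfl⟩ := hz
      simp [hM0]
    · have hor : 1 ≤ i₂ ∨ 1 ≤ i₃ := by omega
      have hs : i₁ + i₂ + i₃ ≤ L := by omega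
      have hnat := prod_choose_le n A B C T L i₁ i₂ i₃ hA hB hC hT hs hor
      have hR : (A.choose i₁ : ℝ) * (B.choose i₂ : ℝ) *
          ((C.choose i₃ : ℝ) * (T.choose (L - i₁ - i₂ - i₃) : ℝ))
          ≤ ((B : ℝ) + (C : ℝ)) * (n : ℝ) ^ (L - 1) := by
        exact_mod_cast hnat
      have hD : ((min i₂ (k - i₁) : ℝ) - (min i₃ (k - i₁ - i₂) : ℝ)) ^ 2 ≤ (2 * (L : ℝ)) ^ 2 := by
        have f1 : (0 : ℝ) ≤ (i₂ : ℝ) := by positivity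
        have f2 : (0 : ℝ) ≤ (i₃ : ℝ) := by positivity
        have f3 : (i₁ : ℝ) + 1 ≤ (k : ℝ) := by exact_mod_cast h1
        have f4 : (k : ℝ) ≤ (L : ℝ) := by exact_mod_cast hkL
        have f5 : (i₁ : ℝ) + (i₂ : ℝ) + (i₃ : ℝ) ≤ (L : ℝ) := by exact_mod_cast hs
        have a1 : min (i₂ : ℝ) ((k : ℝ) - i₁) ≤ (k : ℝ) - i₁ := min_le_right _ _
        have a2 : (0 : ℝ) ≤ min (i₂ : ℝ) ((k : ℝ) - i₁) := le_min f1 (by linarith)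
        have a3 : min (i₃ : ℝ) ((k : ℝ) - i₁ - i₂) ≤ (i₃ : ℝ) := min_le_left _ _
        have a4 : -(L : ℝ) ≤ min (i₃ : ℝ) ((k : ℝ) - i₁ - i₂) :=
          le_min (by linarith) (by linarith)
        apply sq_le_sq'
        · linarith
        · linarith
      calc (A.choose i₁ : ℝ) * ((B.choose i₂ : ℝ) *
            (((min i₂ (k - i₁) : ℝ) - (min i₃ (k - i₁ - i₂) : ℝ)) ^ 2 *
              (C.choose i₃ : ℝ) * (T.choose (L - i₁ - i₂ - i₃) : ℝ)))
          = ((min i₂ (k - i₁) : ℝ) - (min i₃ (k - i₁ - i₂) : ℝ)) ^ 2 *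
            ((A.choose i₁ : ℝ) * (B.choose i₂ : ℝ) *
              ((C.choose i₃ : ℝ) * (T.choose (L - i₁ - i₂ - i₃) : ℝ))) := by ring
        _ ≤ (2 * (L : ℝ)) ^ 2 * (((B : ℝ) + (C : ℝ)) * (n : ℝ) ^ (L - 1)) := by
            apply mul_le_mul hD hR (by positivity) (by positivity)
        _ = M := by rw [hMdef]; ring
  -- sum the bound
  have expand : Zdiag L k j x = ∑ i₁ ∈ Finset.range k, ∑ i₂ ∈ Finset.range (L - i₁ + 1),
      ∑ i₃ ∈ Finset.range (L - i₁ - i₂ + 1),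
      ((A.choose i₁ : ℝ)) * (((B.choose i₂ : ℝ)) *
        (((min i₂ (k - i₁) : ℝ) - (min i₃ (k - i₁ - i₂) : ℝ)) ^ 2 *
          ((C.choose i₃ : ℝ)) * ((T.choose (L - i₁ - i₂ - i₃) : ℝ)))) := by
    unfold Zdiag
    simp only [Finset.mul_sum, hAdef, hBdef, hCdef, hTdef]
  rw [expand]
  have step : ∑ i₁ ∈ Finset.range k, ∑ i₂ ∈ Finset.range (L - i₁ + 1),
      ∑ i₃ ∈ Finset.range (L - i₁ - i₂ + 1),
      ((A.choose i₁ : ℝ)) * (((B.choose i₂ : ℝ)) *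
        (((min i₂ (k - i₁) : ℝ) - (min i₃ (k - i₁ - i₂) : ℝ)) ^ 2 *
          ((C.choose i₃ : ℝ)) * ((T.choose (L - i₁ - i₂ - i₃) : ℝ))))
      ≤ ∑ i₁ ∈ Finset.range k, ((L : ℝ) + 1) * (((L : ℝ) + 1) * M) := by
    apply Finset.sum_le_sum
    intro i₁ h1
    calc ∑ i₂ ∈ Finset.range (L - i₁ + 1), ∑ i₃ ∈ Finset.range (L - i₁ - i₂ + 1),
          ((A.choose i₁ : ℝ)) * (((B.choose i₂ : ℝ)) *
            (((min i₂ (k - i₁) : ℝ) - (min i₃ (k - i₁ - i₂) : ℝ)) ^ 2 *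
              ((C.choose i₃ : ℝ)) * ((T.choose (L - i₁ - i₂ - i₃) : ℝ))))
        ≤ ∑ i₂ ∈ Finset.range (L - i₁ + 1), ((L : ℝ) + 1) * M := by
          apply Finset.sum_le_sum
          intro i₂ h2
          calc ∑ i₃ ∈ Finset.range (L - i₁ - i₂ + 1),
                ((A.choose i₁ : ℝ)) * (((B.choose i₂ : ℝ)) *
                  (((min i₂ (k - i₁) : ℝ) - (min i₃ (k - i₁ - i₂) : ℝ)) ^ 2 *
                    ((C.choose i₃ : ℝ)) * ((T.choose (L - i₁ - i₂ - i₃) : ℝ))))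
              ≤ ∑ _i₃ ∈ Finset.range (L - i₁ - i₂ + 1), M :=
                Finset.sum_le_sum (fun i₃ h3 => hterm i₁ h1 i₂ h2 i₃ h3)
            _ = ((L - i₁ - i₂ + 1 : ℕ) : ℝ) * M := by
                rw [Finset.sum_const, Finset.card_range, nsmul_eq_mul]
            _ ≤ ((L : ℝ) + 1) * M := by
                apply mul_le_mul_of_nonneg_right _ hM0
                have : (L - i₁ - i₂ + 1 : ℕ) ≤ L + 1 := by omega
                calc ((L - i₁ - i₂ + 1 : ℕ) : ℝ) ≤ ((L + 1 : ℕ) : ℝ) := by exact_mod_cast this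
                  _ = (L : ℝ) + 1 := by push_cast; ring
      _ = ((L - i₁ + 1 : ℕ) : ℝ) * (((L : ℝ) + 1) * M) := by
          rw [Finset.sum_const, Finset.card_range, nsmul_eq_mul]
      _ ≤ ((L : ℝ) + 1) * (((L : ℝ) + 1) * M) := by
          apply mul_le_mul_of_nonneg_right _ (by positivity)
          have : (L - i₁ + 1 : ℕ) ≤ L + 1 := by omega
          calc ((L - i₁ + 1 : ℕ) : ℝ) ≤ ((L + 1 : ℕ) : ℝ) := by exact_mod_cast this
            _ = (L : ℝ) + 1 := by push_cast; ring
  refine le_trans step ?_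
  rw [Finset.sum_const, Finset.card_range, nsmul_eq_mul, hMdef]
  have hBC : (0 : ℝ) ≤ (B : ℝ) + (C : ℝ) := by positivity
  have hnp : (0 : ℝ) ≤ (n : ℝ) ^ (L - 1) := by positivity
  have : (k : ℝ) * (((L : ℝ) + 1) * (((L : ℝ) + 1) * ((2 * (L : ℝ)) ^ 2 * (n : ℝ) ^ (L - 1) * ((B : ℝ) + (C : ℝ)))))
      = ((k : ℝ) * (L + 1) * (L + 1) * (2 * (L : ℝ)) ^ 2) * (n : ℝ) ^ (L - 1) * ((B : ℝ) + (C : ℝ)) := by ring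
  rw [this]
  have hc : ((k : ℝ) * (L + 1) * (L + 1) * (2 * (L : ℝ)) ^ 2)
      ≤ (k : ℝ) * (L + 1) * (L + 1) * (2 * (L : ℝ)) ^ 2 + 1 := by linarith
  calc ((k : ℝ) * (L + 1) * (L + 1) * (2 * (L : ℝ)) ^ 2) * (n : ℝ) ^ (L - 1) * ((B : ℝ) + (C : ℝ))
      ≤ ((k : ℝ) * (L + 1) * (L + 1) * (2 * (L : ℝ)) ^ 2 + 1) * (n : ℝ) ^ (L - 1) * ((B : ℝ) + (C : ℝ)) := by
        apply mul_le_mul_of_nonneg_right _ hBC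
        exact mul_le_mul_of_nonneg_right hc hnp
end
end

section
/- There exists a constant c̃_Z ∈ (0,∞), depending only on L and k, such that for every n ∈ ℕ, every finitely supported sequence x = (x_m)_{m∈ℕ₀} of nonnegative integers with Σ_{m=0}^∞ x_m = n, and all j₁ < j₂ in ℕ₀, one has Z(j₁,j₂,x) ≤ c̃_Z · ( n^{L−2} · ( x_{j₁}x_{j₂} + x_{j₁−1}x_{j₂} + x_{j₁}x_{j₂−1} + x_{j₁−1}x_{j₂−1} ) + 1_{j₂=j₁+1} · n^{L−1} · x_{j₁} ). -/
noncomputable section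

open scoped BigOperators

/-- The off-diagonal quadratic-covariation rate function `Z(j₁, j₂, x)` for `j₁ < j₂`. -/
def Zoff (L k : ℕ) (j₁ j₂ : ℕ) (x : ℕ → ℕ) : ℝ :=
  ∑ i₁ ∈ Finset.range (k - 1), ((∑ m ∈ Finset.range (j₁ - 1), x m).choose i₁ : ℝ) *
   ∑ i₂ ∈ Finset.range (k - i₁), ((prevN x j₁).choose i₂ : ℝ) *
    ∑ i₃ ∈ Finset.range (k - i₁ - i₂), ((i₂ : ℝ) - (i₃ : ℝ)) * ((x j₁).choose i₃ : ℝ) *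
     ∑ i₄ ∈ Finset.range (k - i₁ - i₂ - i₃),
       ((∑ m ∈ Finset.Ico (j₁ + 1) (j₂ - 1), x m).choose i₄ : ℝ) *
      ∑ i₅ ∈ Finset.range (L - i₁ - i₂ - i₃ - i₄ + 1),
        (((if j₁ + 1 < j₂ then prevN x j₂ else 0).choose i₅ : ℝ)) *
       ∑ i₆ ∈ Finset.range (L - i₁ - i₂ - i₃ - i₄ - i₅ + 1),
         ((min ((if j₂ = j₁ + 1 then 1 else 0) * ((i₃ : ℤ) - (i₅ : ℤ)) + (i₅ : ℤ))
              (max ((k : ℤ) - i₁ - i₂ - i₃ - i₄) 0)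
            - min (i₆ : ℤ) (max ((k : ℤ) - i₁ - i₂ - i₃ - i₄ - i₅) 0) : ℤ) : ℝ) *
           ((x j₂).choose i₆ : ℝ) *
           ((tailN x j₂).choose (L - i₁ - i₂ - i₃ - i₄ - i₅ - i₆) : ℝ)

lemma choose_mul_bound (a n i e : ℕ) (h : a ≤ n) (he : e ≤ i) :
    ((a.choose i : ℕ) : ℝ) ≤ (a:ℝ) ^ e * (n:ℝ) ^ (i - e) := by
  have h1 : (a.choose i : ℝ) ≤ (a:ℝ) ^ i := by
    exact_mod_cast Nat.cast_le.mpr (Nat.choose_le_pow a i)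
  have h2 : (a:ℝ) ^ i = (a:ℝ) ^ e * (a:ℝ) ^ (i - e) := by
    rw [← pow_add]; congr 1; omega
  calc (a.choose i : ℝ) ≤ (a:ℝ) ^ i := h1
    _ = (a:ℝ) ^ e * (a:ℝ) ^ (i - e) := h2
    _ ≤ (a:ℝ) ^ e * (n:ℝ) ^ (i - e) := by gcongr

lemma Pbound (n L : ℕ) (a₁ a₂ a₃ a₄ a₅ a₆ a₇ : ℕ)
    (h₁ : a₁ ≤ n) (h₂ : a₂ ≤ n) (h₃ : a₃ ≤ n) (h₄ : a₄ ≤ n) (h₅ : a₅ ≤ n)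
    (h₆ : a₆ ≤ n) (h₇ : a₇ ≤ n)
    (i₁ i₂ i₃ i₄ i₅ i₆ e₁ e₂ e₃ e₄ e₅ e₆ : ℕ)
    (he₁ : e₁ ≤ i₁) (he₂ : e₂ ≤ i₂) (he₃ : e₃ ≤ i₃) (he₄ : e₄ ≤ i₄)
    (he₅ : e₅ ≤ i₅) (he₆ : e₆ ≤ i₆) (hs : i₁ + i₂ + i₃ + i₄ + i₅ + i₆ ≤ L) :
    (a₁.choose i₁ : ℝ) * (a₂.choose i₂ : ℝ) * (a₃.choose i₃ : ℝ) * (a₄.choose i₄ : ℝ)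
      * (a₅.choose i₅ : ℝ) * (a₆.choose i₆ : ℝ)
      * (a₇.choose (L - i₁ - i₂ - i₃ - i₄ - i₅ - i₆) : ℝ)
    ≤ (a₁:ℝ) ^ e₁ * (a₂:ℝ) ^ e₂ * (a₃:ℝ) ^ e₃ * (a₄:ℝ) ^ e₄ * (a₅:ℝ) ^ e₅ * (a₆:ℝ) ^ e₆
      * (n:ℝ) ^ (L - (e₁ + e₂ + e₃ + e₄ + e₅ + e₆)) := by
  have b₇ : (a₇.choose (L - i₁ - i₂ - i₃ - i₄ - i₅ - i₆) : ℝ)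
      ≤ (n:ℝ) ^ (L - i₁ - i₂ - i₃ - i₄ - i₅ - i₆) := by
    have := choose_mul_bound a₇ n (L - i₁ - i₂ - i₃ - i₄ - i₅ - i₆) 0 h₇ (Nat.zero_le _)
    simpa using this
  calc (a₁.choose i₁ : ℝ) * (a₂.choose i₂ : ℝ) * (a₃.choose i₃ : ℝ) * (a₄.choose i₄ : ℝ)
      * (a₅.choose i₅ : ℝ) * (a₆.choose i₆ : ℝ)
      * (a₇.choose (L - i₁ - i₂ - i₃ - i₄ - i₅ - i₆) : ℝ)
      ≤ ((a₁:ℝ) ^ e₁ * (n:ℝ) ^ (i₁ - e₁)) * ((a₂:ℝ) ^ e₂ * (n:ℝ) ^ (i₂ - e₂))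
        * ((a₃:ℝ) ^ e₃ * (n:ℝ) ^ (i₃ - e₃)) * ((a₄:ℝ) ^ e₄ * (n:ℝ) ^ (i₄ - e₄))
        * ((a₅:ℝ) ^ e₅ * (n:ℝ) ^ (i₅ - e₅)) * ((a₆:ℝ) ^ e₆ * (n:ℝ) ^ (i₆ - e₆))
        * (n:ℝ) ^ (L - i₁ - i₂ - i₃ - i₄ - i₅ - i₆) := by
        gcongr ?_ * ?_ * ?_ * ?_ * ?_ * ?_ * ?_ <;>
          first
            | exact b₇
            | exact choose_mul_bound _ _ _ _ ‹_› ‹_›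
    _ = (a₁:ℝ) ^ e₁ * (a₂:ℝ) ^ e₂ * (a₃:ℝ) ^ e₃ * (a₄:ℝ) ^ e₄ * (a₅:ℝ) ^ e₅ * (a₆:ℝ) ^ e₆
        * ((n:ℝ) ^ ((i₁ - e₁) + (i₂ - e₂) + (i₃ - e₃) + (i₄ - e₄) + (i₅ - e₅) + (i₆ - e₆)
            + (L - i₁ - i₂ - i₃ - i₄ - i₅ - i₆))) := by
        simp only [pow_add]; ring
    _ = _ := by
        congr 2
        omega

lemma stepa (r : ℕ) (M : ℝ) (hr : (r:ℝ) ≤ M) (a : ℝ) (g : ℕ → ℝ) (C : ℝ) (hC : 0 ≤ C)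
    (h : ∀ i ∈ Finset.range r, a * |g i| ≤ C) :
    a * |∑ i ∈ Finset.range r, g i| ≤ M * C := by
  have hM : 0 ≤ M := le_trans (Nat.cast_nonneg r) hr
  by_cases ha : 0 ≤ a
  · calc a * |∑ i ∈ Finset.range r, g i| ≤ a * ∑ i ∈ Finset.range r, |g i| := by
          gcongr; exact Finset.abs_sum_le_sum_abs _ _
      _ = ∑ i ∈ Finset.range r, a * |g i| := Finset.mul_sum _ _ _
      _ ≤ ∑ _i ∈ Finset.range r, C := Finset.sum_le_sum h
      _ = (r : ℝ) * C := by simp [mul_comm]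
      _ ≤ M * C := mul_le_mul_of_nonneg_right hr hC
  · push_neg at ha
    have h0 : a * |∑ i ∈ Finset.range r, g i| ≤ 0 :=
      mul_nonpos_of_nonpos_of_nonneg ha.le (abs_nonneg _)
    exact h0.trans (mul_nonneg hM hC)

lemma step0 (r : ℕ) (M : ℝ) (hr : (r:ℝ) ≤ M) (g : ℕ → ℝ) (C : ℝ) (hC : 0 ≤ C)
    (h : ∀ i ∈ Finset.range r, (1:ℝ) * |g i| ≤ C) :
    |∑ i ∈ Finset.range r, g i| ≤ M * C := by
  have := stepa r M hr 1 g C hC h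
  simpa using this

lemma levelA (r : ℕ) (M a C cc : ℝ) (g : ℕ → ℝ) (hr : (r:ℝ) ≤ M) (hC : 0 ≤ C)
    (h : ∀ i ∈ Finset.range r, (a * |cc|) * |g i| ≤ C) :
    a * |cc * ∑ i ∈ Finset.range r, g i| ≤ M * C := by
  rw [abs_mul, ← mul_assoc]
  exact stepa r M hr (a * |cc|) g C hC h

set_option maxHeartbeats 4000000 in
/-- there is `c̃_Z ∈ (0,∞)`, depending only on `L` and `k`, such that for
every `n`, every finitely supported `x : ℕ → ℕ` with `Σ_m x_m = n`, and all `j₁ < j₂`,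
`Z(j₁,j₂,x) ≤ c̃_Z(n^{L−2}(x_{j₁}x_{j₂} + x_{j₁−1}x_{j₂} + x_{j₁}x_{j₂−1} + x_{j₁−1}x_{j₂−1})
  + 1_{j₂=j₁+1}·n^{L−1}·x_{j₁})`. -/
theorem Zoff_bound (L k : ℕ) (hL : 1 ≤ L) (hk : 1 ≤ k) (hkL : k ≤ L) :
    ∃ c : ℝ, 0 < c ∧ ∀ (n : ℕ) (x : ℕ → ℕ), (Function.support x).Finite →
      (∑ᶠ m : ℕ, x m) = n → ∀ j₁ j₂ : ℕ, j₁ < j₂ →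
      Zoff L k j₁ j₂ x
        ≤ c * ((n : ℝ) ^ (L - 2) *
              ((x j₁ : ℝ) * (x j₂ : ℝ) + (prevN x j₁ : ℝ) * (x j₂ : ℝ)
                + (x j₁ : ℝ) * (prevN x j₂ : ℝ) + (prevN x j₁ : ℝ) * (prevN x j₂ : ℝ))
            + (if j₂ = j₁ + 1 then 1 else 0) * (n : ℝ) ^ (L - 1) * (x j₁ : ℝ)) := by
  refine ⟨((L:ℝ)+1)^6 * (L:ℝ)^2 + 1, by positivity, ?_⟩
  intro n x hfin hsum j₁ j₂ hj
  -- partial sums are at most n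
  have hpart : ∀ s : Finset ℕ, (∑ m ∈ s, x m) ≤ n := by
    intro s
    have h1 : ∑ᶠ m, x m = ∑ m ∈ hfin.toFinset, x m := finsum_eq_sum x hfin
    have h2 : ∑ m ∈ s, x m ≤ ∑ m ∈ s ∪ hfin.toFinset, x m :=
      Finset.sum_le_sum_of_subset Finset.subset_union_left
    have h3 : ∑ m ∈ s ∪ hfin.toFinset, x m = ∑ m ∈ hfin.toFinset, x m := by
      refine (Finset.sum_subset Finset.subset_union_right ?_).symm
      intro m _ hm
      by_contra hx0
      exact hm (hfin.mem_toFinset.mpr hx0)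
    rw [h3] at h2
    rw [h1] at hsum
    exact h2.trans hsum.le
  have hxle : ∀ j, x j ≤ n := fun j => by simpa using hpart {j}
  have hprev : ∀ j, prevN x j ≤ n := by
    intro j
    cases j with
    | zero => exact Nat.zero_le n
    | succ m => simpa [prevN] using hxle m
  have htn0 : tailN x j₂ ≤ n := by
    have hshift : (Function.support fun m => x (j₂ + 1 + m)).Finite := by
      have hsub : (Function.support fun m => x (j₂ + 1 + m))
          ⊆ (fun m => m - (j₂ + 1)) '' (Function.support x) := by
        intro m hm
        exact ⟨j₂ + 1 + m, hm, by show j₂ + 1 + m - (j₂ + 1) = m; omega⟩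
      exact (hfin.image _).subset hsub
    have h1 : tailN x j₂ = ∑ m ∈ hshift.toFinset, x (j₂ + 1 + m) :=
      finsum_eq_sum _ hshift
    have h2 : ∑ m ∈ hshift.toFinset, x (j₂ + 1 + m)
        = ∑ m ∈ hshift.toFinset.image (fun m => j₂ + 1 + m), x m := by
      rw [Finset.sum_image (by intro a _ b _ hab; have hab' : j₂ + 1 + a = j₂ + 1 + b := hab; omega)]
    rw [h1, h2]
    exact hpart _
  simp only [Zoff]
  set ind := (if j₂ = j₁ + 1 then (1:ℝ) else 0) with hinddef
  set R := (n : ℝ) ^ (L - 2) *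
              ((x j₁ : ℝ) * (x j₂ : ℝ) + (prevN x j₁ : ℝ) * (x j₂ : ℝ)
                + (x j₁ : ℝ) * (prevN x j₂ : ℝ) + (prevN x j₁ : ℝ) * (prevN x j₂ : ℝ))
            + ind * (n : ℝ) ^ (L - 1) * (x j₁ : ℝ) with hRdef
  set S1 := ∑ m ∈ Finset.range (j₁ - 1), x m with hS1def
  set S2 := ∑ m ∈ Finset.Ico (j₁ + 1) (j₂ - 1), x m with hS2def
  set p1 := prevN x j₁ with hp1def
  set x1 := x j₁ with hx1def
  set q2 := prevN x j₂ with hq2def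
  set q' := if j₁ + 1 < j₂ then q2 else 0 with hq'def
  set x2 := x j₂ with hx2def
  set T2 := tailN x j₂ with hT2def
  clear_value ind S1 S2 p1 x1 q2 q' x2 T2 R
  have hS1n : S1 ≤ n := by rw [hS1def]; exact hpart _
  have hS2n : S2 ≤ n := by rw [hS2def]; exact hpart _
  have hp1n : p1 ≤ n := by rw [hp1def]; exact hprev j₁
  have hx1n : x1 ≤ n := by rw [hx1def]; exact hxle j₁
  have hq2n : q2 ≤ n := by rw [hq2def]; exact hprev j₂
  have hq'n : q' ≤ n := by
    rw [hq'def]; split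
    · exact hq2n
    · exact Nat.zero_le n
  have hx2n : x2 ≤ n := by rw [hx2def]; exact hxle j₂
  have htn : T2 ≤ n := htn0
  have hind : (0:ℝ) ≤ ind := by rw [hinddef]; split <;> norm_num
  have nn1 : (0:ℝ) ≤ (n:ℝ) ^ (L - 2) * ((x1:ℝ) * (x2:ℝ)) := by positivity
  have nn2 : (0:ℝ) ≤ (n:ℝ) ^ (L - 2) * ((p1:ℝ) * (x2:ℝ)) := by positivity
  have nn3 : (0:ℝ) ≤ (n:ℝ) ^ (L - 2) * ((x1:ℝ) * (q2:ℝ)) := by positivity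
  have nn4 : (0:ℝ) ≤ (n:ℝ) ^ (L - 2) * ((p1:ℝ) * (q2:ℝ)) := by positivity
  have nn5 : (0:ℝ) ≤ ind * (n:ℝ) ^ (L - 1) * (x1:ℝ) :=
    mul_nonneg (mul_nonneg hind (by positivity)) (Nat.cast_nonneg _)
  have hR0 : (0:ℝ) ≤ R := by rw [hRdef]; nlinarith [nn1, nn2, nn3, nn4, nn5]
  have hA : (x1:ℝ) * (x2:ℝ) * (n:ℝ) ^ (L - 2) ≤ R := by
    rw [hRdef]; nlinarith [nn2, nn3, nn4, nn5]
  have hB2 : (p1:ℝ) * (x2:ℝ) * (n:ℝ) ^ (L - 2) ≤ R := by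
    rw [hRdef]; nlinarith [nn1, nn3, nn4, nn5]
  have hC2 : (x1:ℝ) * (q2:ℝ) * (n:ℝ) ^ (L - 2) ≤ R := by
    rw [hRdef]; nlinarith [nn1, nn2, nn4, nn5]
  have hD2 : (p1:ℝ) * (q2:ℝ) * (n:ℝ) ^ (L - 2) ≤ R := by
    rw [hRdef]; nlinarith [nn1, nn2, nn3, nn5]
  have hE2 : j₂ = j₁ + 1 → (x1:ℝ) * (n:ℝ) ^ (L - 1) ≤ R := by
    intro hadj
    have h1 : ind = 1 := by rw [hinddef, if_pos hadj]
    rw [hRdef, h1]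
    nlinarith [nn1, nn2, nn3, nn4]
  have hC6 : (0:ℝ) ≤ (L:ℝ)^2 * R := mul_nonneg (by positivity) hR0
  have hC5 : (0:ℝ) ≤ ((L:ℝ)+1) * ((L:ℝ)^2 * R) := mul_nonneg (by positivity) hC6
  have hC4 : (0:ℝ) ≤ ((L:ℝ)+1) * (((L:ℝ)+1) * ((L:ℝ)^2 * R)) := mul_nonneg (by positivity) hC5
  have hC3 : (0:ℝ) ≤ ((L:ℝ)+1) * (((L:ℝ)+1) * (((L:ℝ)+1) * ((L:ℝ)^2 * R))) :=
    mul_nonneg (by positivity) hC4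
  have hC2' : (0:ℝ) ≤ ((L:ℝ)+1) * (((L:ℝ)+1) * (((L:ℝ)+1) * (((L:ℝ)+1) * ((L:ℝ)^2 * R)))) :=
    mul_nonneg (by positivity) hC3
  have hC1 : (0:ℝ) ≤ ((L:ℝ)+1) * (((L:ℝ)+1) * (((L:ℝ)+1) * (((L:ℝ)+1) * (((L:ℝ)+1) *
      ((L:ℝ)^2 * R))))) := mul_nonneg (by positivity) hC2'
  refine le_trans (le_abs_self _) (le_trans (step0 _ ((L:ℝ)+1)
      (by exact_mod_cast (show k - 1 ≤ L + 1 by omega)) _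
      (((L:ℝ)+1) * (((L:ℝ)+1) * (((L:ℝ)+1) * (((L:ℝ)+1) * (((L:ℝ)+1) * ((L:ℝ)^2 * R))))))
      hC1 ?_) ?_)
  swap
  · -- final numeric step
    nlinarith [hR0]
  intro i₁ hi₁
  simp only [Finset.mem_range] at hi₁
  apply levelA _ _ _ _ _ _ (by exact_mod_cast (show k - i₁ ≤ L + 1 by omega)) hC2'
  intro i₂ hi₂
  simp only [Finset.mem_range] at hi₂
  apply levelA _ _ _ _ _ _ (by exact_mod_cast (show k - i₁ - i₂ ≤ L + 1 by omega)) hC3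
  intro i₃ hi₃
  simp only [Finset.mem_range] at hi₃
  apply levelA _ _ _ _ _ _ (by exact_mod_cast (show k - i₁ - i₂ - i₃ ≤ L + 1 by omega)) hC4
  intro i₄ hi₄
  simp only [Finset.mem_range] at hi₄
  apply levelA _ _ _ _ _ _
    (by exact_mod_cast (show L - i₁ - i₂ - i₃ - i₄ + 1 ≤ L + 1 by omega)) hC5
  intro i₅ hi₅
  simp only [Finset.mem_range] at hi₅
  apply levelA _ _ _ _ _ _
    (by exact_mod_cast (show L - i₁ - i₂ - i₃ - i₄ - i₅ + 1 ≤ L + 1 by omega)) hC6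
  intro i₆ hi₆
  simp only [Finset.mem_range] at hi₆
  
  -- innermost per-term bound
  simp only [abs_mul, Nat.abs_cast, one_mul]
  set Bz := ((if j₂ = j₁ + 1 then 1 else 0) * ((i₃ : ℤ) - (i₅ : ℤ)) + (i₅ : ℤ))
      ⊓ (((k : ℤ) - (i₁ : ℤ) - (i₂ : ℤ) - (i₃ : ℤ) - (i₄ : ℤ)) ⊔ 0)
      - (i₆ : ℤ) ⊓ (((k : ℤ) - (i₁ : ℤ) - (i₂ : ℤ) - (i₃ : ℤ) - (i₄ : ℤ) - (i₅ : ℤ)) ⊔ 0)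
      with hBzdef
  have hdb : |(i₂ : ℝ) - (i₃ : ℝ)| ≤ (L : ℝ) := by
    have h2 : (i₂ : ℝ) ≤ (L : ℝ) := by exact_mod_cast (show i₂ ≤ L by omega)
    have h3 : (i₃ : ℝ) ≤ (L : ℝ) := by exact_mod_cast (show i₃ ≤ L by omega)
    have h2' : (0:ℝ) ≤ (i₂ : ℝ) := Nat.cast_nonneg _
    have h3' : (0:ℝ) ≤ (i₃ : ℝ) := Nat.cast_nonneg _
    rw [abs_le]; constructor <;> linarith
  have hBza : |Bz| ≤ (L : ℤ) := by
    rw [hBzdef]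
    rcases eq_or_ne j₂ (j₁ + 1) with h | h
    · rw [if_pos h, abs_le]; omega
    · rw [if_neg h, abs_le]; omega
  have hBr : |((Bz : ℤ) : ℝ)| ≤ (L : ℝ) := by exact_mod_cast hBza
  clear_value Bz
  have h1 : |(i₂ : ℝ) - (i₃ : ℝ)| * |((Bz : ℤ) : ℝ)| ≤ (L : ℝ) * (L : ℝ) :=
    mul_le_mul hdb hBr (abs_nonneg _) (by positivity)
  by_cases h23 : i₂ = i₃
  · rw [h23, sub_self, abs_zero]
    simp only [zero_mul, mul_zero]
    exact mul_nonneg (by positivity) hR0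
  by_cases hadj : j₂ = j₁ + 1
  · -- adjacent case
    have hq'0 : q' = 0 := by rw [hq'def, if_neg (by omega)]
    have hq2x1 : q2 = x1 := by rw [hq2def, hadj, hx1def]; rfl
    by_cases h5 : i₅ = 0
    · by_cases h36 : i₃ = 0 ∧ i₆ = 0
      · obtain ⟨h3, h6⟩ := h36
        have hz : Bz = 0 := by rw [hBzdef, if_pos hadj]; omega
        rw [hz]
        simp only [Int.cast_zero, abs_zero, mul_zero, zero_mul]
        exact mul_nonneg (by positivity) hR0
      · push_neg at h36
        by_cases h2 : i₂ = 0
        · have h3 : i₃ ≠ 0 := by omega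
          by_cases h6 : i₆ = 0
          · by_cases h3two : 2 ≤ i₃
            · -- x1^2 leaf
              have hprod := Pbound n L S1 p1 x1 S2 q' x2 T2 hS1n hp1n hx1n hS2n hq'n hx2n
                htn i₁ i₂ i₃ i₄ i₅ i₆ 0 0 2 0 0 0 (by omega) (by omega) (by omega)
                (by omega) (by omega) (by omega) (by omega)
              simp only [pow_zero, pow_one, one_mul, mul_one] at hprod
              norm_num at hprod
              have hC2' := hC2
              rw [hq2x1] at hC2'
              have hRle := hprod.trans
                (show (x1:ℝ)^2 * (n:ℝ)^(L-2) ≤ R by nlinarith [hC2'])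
              have hmul := mul_le_mul h1 hRle (by positivity) (by positivity)
              linarith [hmul]
            · -- i₃ = 1 leaf : x1 * n^(L-1)
              have hprod := Pbound n L S1 p1 x1 S2 q' x2 T2 hS1n hp1n hx1n hS2n hq'n hx2n
                htn i₁ i₂ i₃ i₄ i₅ i₆ 0 0 1 0 0 0 (by omega) (by omega) (by omega)
                (by omega) (by omega) (by omega) (by omega)
              simp only [pow_zero, pow_one, one_mul, mul_one] at hprod
              norm_num at hprod
              have hRle := hprod.trans (hE2 hadj)
              have hmul := mul_le_mul h1 hRle (by positivity) (by positivity)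
              linarith [hmul]
          · -- x1 * x2 leaf
            have hprod := Pbound n L S1 p1 x1 S2 q' x2 T2 hS1n hp1n hx1n hS2n hq'n hx2n
              htn i₁ i₂ i₃ i₄ i₅ i₆ 0 0 1 0 0 1 (by omega) (by omega) (by omega)
              (by omega) (by omega) (by omega) (by omega)
            simp only [pow_zero, pow_one, one_mul, mul_one] at hprod
            norm_num at hprod
            have hRle := hprod.trans hA
            have hmul := mul_le_mul h1 hRle (by positivity) (by positivity)
            linarith [hmul]
        · by_cases h6 : i₆ = 0
          · -- p1 * x1 leaf (= p1 * q2)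
            have h3 : i₃ ≠ 0 := by omega
            have hprod := Pbound n L S1 p1 x1 S2 q' x2 T2 hS1n hp1n hx1n hS2n hq'n hx2n
              htn i₁ i₂ i₃ i₄ i₅ i₆ 0 1 1 0 0 0 (by omega) (by omega) (by omega)
              (by omega) (by omega) (by omega) (by omega)
            simp only [pow_zero, pow_one, one_mul, mul_one] at hprod
            norm_num at hprod
            have hD2' := hD2
            rw [hq2x1] at hD2'
            have hRle := hprod.trans hD2'
            have hmul := mul_le_mul h1 hRle (by positivity) (by positivity)
            linarith [hmul]
          · -- p1 * x2 leaf
            have hprod := Pbound n L S1 p1 x1 S2 q' x2 T2 hS1n hp1n hx1n hS2n hq'n hx2n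
              htn i₁ i₂ i₃ i₄ i₅ i₆ 0 1 0 0 0 1 (by omega) (by omega) (by omega)
              (by omega) (by omega) (by omega) (by omega)
            simp only [pow_zero, pow_one, one_mul, mul_one] at hprod
            norm_num at hprod
            have hRle := hprod.trans hB2
            have hmul := mul_le_mul h1 hRle (by positivity) (by positivity)
            linarith [hmul]
    · -- i₅ ≥ 1 : the q' binomial vanishes
      have hch : q'.choose i₅ = 0 := by
        rw [hq'0]; exact Nat.choose_eq_zero_of_lt (by omega)
      rw [hch]
      simp only [Nat.cast_zero, mul_zero, zero_mul]
      exact mul_nonneg (by positivity) hR0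
  · -- non-adjacent case
    have hlt : j₁ + 1 < j₂ := by omega
    have hq'eq : q' = q2 := by rw [hq'def, if_pos hlt]
    by_cases h56 : i₅ = 0 ∧ i₆ = 0
    · obtain ⟨h5, h6⟩ := h56
      have hz : Bz = 0 := by rw [hBzdef, if_neg hadj]; omega
      rw [hz]
      simp only [Int.cast_zero, abs_zero, mul_zero, zero_mul]
      exact mul_nonneg (by positivity) hR0
    · push_neg at h56
      by_cases h2 : i₂ = 0
      · have h3 : i₃ ≠ 0 := by omega
        by_cases h5 : i₅ = 0
        · -- x1 * x2 leaf
          have hprod := Pbound n L S1 p1 x1 S2 q' x2 T2 hS1n hp1n hx1n hS2n hq'n hx2n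
            htn i₁ i₂ i₃ i₄ i₅ i₆ 0 0 1 0 0 1 (by omega) (by omega) (by omega)
            (by omega) (by omega) (by omega) (by omega)
          simp only [pow_zero, pow_one, one_mul, mul_one] at hprod
          norm_num at hprod
          have hRle := hprod.trans hA
          have hmul := mul_le_mul h1 hRle (by positivity) (by positivity)
          linarith [hmul]
        · -- x1 * q2 leaf
          rw [hq'eq]
          have hprod := Pbound n L S1 p1 x1 S2 q2 x2 T2 hS1n hp1n hx1n hS2n hq2n hx2n
            htn i₁ i₂ i₃ i₄ i₅ i₆ 0 0 1 0 1 0 (by omega) (by omega) (by omega)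
            (by omega) (by omega) (by omega) (by omega)
          simp only [pow_zero, pow_one, one_mul, mul_one] at hprod
          norm_num at hprod
          have hRle := hprod.trans hC2
          have hmul := mul_le_mul h1 hRle (by positivity) (by positivity)
          linarith [hmul]
      · by_cases h5 : i₅ = 0
        · -- p1 * x2 leaf
          have hprod := Pbound n L S1 p1 x1 S2 q' x2 T2 hS1n hp1n hx1n hS2n hq'n hx2n
            htn i₁ i₂ i₃ i₄ i₅ i₆ 0 1 0 0 0 1 (by omega) (by omega) (by omega)
            (by omega) (by omega) (by omega) (by omega)
          simp only [pow_zero, pow_one, one_mul, mul_one] at hprod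
          norm_num at hprod
          have hRle := hprod.trans hB2
          have hmul := mul_le_mul h1 hRle (by positivity) (by positivity)
          linarith [hmul]
        · -- p1 * q2 leaf
          rw [hq'eq]
          have hprod := Pbound n L S1 p1 x1 S2 q2 x2 T2 hS1n hp1n hx1n hS2n hq2n hx2n
            htn i₁ i₂ i₃ i₄ i₅ i₆ 0 1 0 0 1 0 (by omega) (by omega) (by omega)
            (by omega) (by omega) (by omega) (by omega)
          simp only [pow_zero, pow_one, one_mul, mul_one] at hprod
          norm_num at hprod
          have hRle := hprod.trans hD2
          have hmul := mul_le_mul h1 hRle (by positivity) (by positivity)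
          linarith [hmul]
end
end

section
/- Let (Ω,ℱ,P) be a probability space, T > 0, and for each n ∈ ℕ let z^n and z be maps from Ω × [0,T] to ℓ² such that the functions ω ↦ sup_{0≤t≤T} ‖z^n(ω,t) − z(ω,t)‖₂, ω ↦ sup_{0≤t≤T} Σ_{j=0}^∞ j² (z^n_j(ω,t))², ω ↦ sup_{0≤t≤T} Σ_{j=0}^∞ j² (z_j(ω,t))², and ω ↦ sup_{0≤t≤T} | Σ_{j=0}^∞ z^n_j(ω,t) − Σ_{j=0}^∞ z_j(ω,t) | are measurable. Assume: (i) sup_{0≤t≤T} ‖z^n(t) − z(t)‖₂ → 0 in probability as n → ∞; (ii) sup_{n∈ℕ} E[ sup_{0≤t≤T} Σ_{j=0}^∞ j² (z^n_j(t))² ] < ∞. Then almost surely sup_{0≤t≤T} Σ_{j=0}^∞ j² (z_j(t))² < ∞ (so that Σ_j |z_j(t)| < ∞ for all t), and sup_{0≤t≤T} | Σ_{j=0}^∞ z^n_j(t) − Σ_{j=0}^∞ z_j(t) | → 0 in probability as n → ∞. -/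
noncomputable section

open scoped BigOperators ENNReal
open MeasureTheory Filter

/-- `sup_{0≤t≤T} ‖u(t) − v(t)‖₂` as an extended nonnegative real. -/
def supNormDiff (T : ℝ) (u v : ℝ → ℕ → ℝ) : ℝ≥0∞ :=
  ⨆ t : Set.Icc (0 : ℝ) T,
    (∑' j : ℕ, ENNReal.ofReal ((u t j - v t j) ^ 2)) ^ (1 / 2 : ℝ)

/-- `sup_{0≤t≤T} Σ_j j²(u_j(t))²` as an extended nonnegative real. -/
def supWeighted (T : ℝ) (u : ℝ → ℕ → ℝ) : ℝ≥0∞ :=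
  ⨆ t : Set.Icc (0 : ℝ) T, ∑' j : ℕ, ENNReal.ofReal ((j : ℝ) ^ 2 * (u t j) ^ 2)

/-- `sup_{0≤t≤T} |Σ_j u_j(t) − Σ_j v_j(t)|` as an extended nonnegative real. -/
def supSumDiff (T : ℝ) (u v : ℝ → ℕ → ℝ) : ℝ≥0∞ :=
  ⨆ t : Set.Icc (0 : ℝ) T, ENNReal.ofReal |(∑' j, u t j) - ∑' j, v t j|

open Topology

lemma summable_of_tsum_ofReal_ne_top {f : ℕ → ℝ} (hf : ∀ j, 0 ≤ f j)
    (h : (∑' j, ENNReal.ofReal (f j)) ≠ ⊤) : Summable f :=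
  (ENNReal.summable_toReal h).congr fun j => ENNReal.toReal_ofReal (hf j)

lemma tsum_le_toReal {f : ℕ → ℝ} (hf : ∀ j, 0 ≤ f j) {c : ℝ≥0∞} (hc : c ≠ ⊤)
    (h : (∑' j, ENNReal.ofReal (f j)) ≤ c) : (∑' j, f j) ≤ c.toReal := by
  have h1 : (∑' j, f j) = (∑' j, ENNReal.ofReal (f j)).toReal := by
    rw [ENNReal.tsum_toReal_eq (fun j => ENNReal.ofReal_ne_top)]
    exact tsum_congr fun j => (ENNReal.toReal_ofReal (hf j)).symm
  rw [h1]; exact ENNReal.toReal_mono hc h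

lemma mul_le_amgm {p q a : ℝ} (ha : 0 < a) (hp : 0 ≤ p) (hq : 0 ≤ q) :
    p * q ≤ a * q^2 + (1/a) * p^2 := by
  rw [← mul_le_mul_iff_right₀ ha]
  have h1 : a * (a*q^2 + (1/a)*p^2) = a^2*q^2 + p^2 := by field_simp
  rw [h1]
  nlinarith [sq_nonneg (a*q - p), mul_nonneg (mul_nonneg ha.le hp) hq]

lemma abs_le_amgm {x a : ℝ} (ha : 0 < a) {j : ℕ} (hj : 1 ≤ j) :
    |x| ≤ a * (1/(j:ℝ)^2) + (1/a) * ((j:ℝ)^2 * x^2) := by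
  have hj0 : (0:ℝ) < (j:ℝ) := by exact_mod_cast hj
  have h1 : |x| = ((j:ℝ)*|x|) * (1/(j:ℝ)) := by field_simp
  rw [h1]
  refine (mul_le_amgm ha (by positivity) (by positivity)).trans (le_of_eq ?_)
  rw [div_pow, one_pow, mul_pow, sq_abs]

lemma summable_inv_sq : Summable (fun j : ℕ => 1 / (j:ℝ)^2) :=
  Real.summable_one_div_nat_pow.mpr one_lt_two

lemma summable_abs_of_weighted {u : ℕ → ℝ} (h : Summable (fun j : ℕ => (j:ℝ)^2 * (u j)^2)) :
    Summable (fun j => |u j|) := by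
  rw [← summable_nat_add_iff 1]
  have h1 : Summable (fun j : ℕ =>
      1*(1/(((j+1:ℕ)):ℝ)^2) + (1/1)*((((j+1:ℕ)):ℝ)^2 * (u (j+1))^2)) := by
    exact (((summable_nat_add_iff 1).mpr summable_inv_sq).mul_left 1).add
      (((summable_nat_add_iff 1).mpr h).mul_left (1/1))
  exact Summable.of_nonneg_of_le (fun j => abs_nonneg _)
    (fun j => abs_le_amgm one_pos (Nat.le_add_left 1 j)) h1

lemma trunc_bound (u v : ℕ → ℝ) (n : ℕ) :
    (∑ j ∈ Finset.range n, ENNReal.ofReal ((j:ℝ)^2 * (v j)^2))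
      ≤ 2 * (∑' j : ℕ, ENNReal.ofReal ((j:ℝ)^2 * (u j)^2))
        + ENNReal.ofReal (2*(n:ℝ)^2) * (∑' j : ℕ, ENNReal.ofReal ((u j - v j)^2)) := by
  have hterm : ∀ j ∈ Finset.range n, ENNReal.ofReal ((j:ℝ)^2 * (v j)^2)
      ≤ 2 * ENNReal.ofReal ((j:ℝ)^2 * (u j)^2)
        + ENNReal.ofReal (2*(n:ℝ)^2) * ENNReal.ofReal ((u j - v j)^2) := by
    intro j hj
    have hjn : (j:ℝ) ≤ (n:ℝ) := by exact_mod_cast (Finset.mem_range.mp hj).le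
    have hj2 : (j:ℝ)^2 ≤ (n:ℝ)^2 := pow_le_pow_left₀ (Nat.cast_nonneg j) hjn 2
    have hreal : (j:ℝ)^2 * (v j)^2
        ≤ (j:ℝ)^2 * (u j)^2 * 2 + 2*(n:ℝ)^2 * (u j - v j)^2 := by
      nlinarith [mul_nonneg (sq_nonneg (j:ℝ)) (sq_nonneg (u j + (u j - v j))),
        mul_nonneg (sub_nonneg.mpr hj2) (sq_nonneg (u j - v j))]
    calc ENNReal.ofReal ((j:ℝ)^2 * (v j)^2)
        ≤ ENNReal.ofReal ((j:ℝ)^2 * (u j)^2 * 2 + 2*(n:ℝ)^2 * (u j - v j)^2) :=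
          ENNReal.ofReal_le_ofReal hreal
      _ ≤ ENNReal.ofReal ((j:ℝ)^2 * (u j)^2 * 2) + ENNReal.ofReal (2*(n:ℝ)^2 * (u j - v j)^2) :=
          ENNReal.ofReal_add_le
      _ = 2 * ENNReal.ofReal ((j:ℝ)^2 * (u j)^2)
          + ENNReal.ofReal (2*(n:ℝ)^2) * ENNReal.ofReal ((u j - v j)^2) := by
          rw [show ENNReal.ofReal ((j:ℝ)^2 * (u j)^2 * 2)
              = 2 * ENNReal.ofReal ((j:ℝ)^2*(u j)^2) from by
            rw [mul_comm, ENNReal.ofReal_mul (by norm_num : (0:ℝ) ≤ 2), ENNReal.ofReal_ofNat],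
            ENNReal.ofReal_mul (show (0:ℝ) ≤ 2*(n:ℝ)^2 by positivity)]
  calc (∑ j ∈ Finset.range n, ENNReal.ofReal ((j:ℝ)^2 * (v j)^2))
      ≤ ∑ j ∈ Finset.range n, (2 * ENNReal.ofReal ((j:ℝ)^2 * (u j)^2)
          + ENNReal.ofReal (2*(n:ℝ)^2) * ENNReal.ofReal ((u j - v j)^2)) :=
        Finset.sum_le_sum hterm
    _ = 2 * (∑ j ∈ Finset.range n, ENNReal.ofReal ((j:ℝ)^2 * (u j)^2))
        + ENNReal.ofReal (2*(n:ℝ)^2) * (∑ j ∈ Finset.range n, ENNReal.ofReal ((u j - v j)^2)) := by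
        rw [Finset.sum_add_distrib, ← Finset.mul_sum, ← Finset.mul_sum]
    _ ≤ _ := add_le_add (mul_le_mul_right (ENNReal.sum_le_tsum _) 2)
        (mul_le_mul_right (ENNReal.sum_le_tsum _) _)

lemma tail_weighted_le {u : ℕ → ℝ} {L : ℝ} (K : ℕ)
    (hu : Summable (fun j : ℕ => (j:ℝ)^2 * (u j)^2))
    (huL : (∑' j : ℕ, (j:ℝ)^2 * (u j)^2) ≤ L) :
    (∑' j : ℕ, (((j+K:ℕ)):ℝ)^2 * (u (j+K))^2) ≤ L := by
  have h := Summable.sum_add_tsum_nat_add K hu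
  have hpos : 0 ≤ ∑ i ∈ Finset.range K, (i:ℝ)^2 * (u i)^2 :=
    Finset.sum_nonneg fun i _ => by positivity
  nlinarith [h, huL]

lemma tail_abs_le {u : ℕ → ℝ} {L a : ℝ} (ha : 0 < a) (K : ℕ) (hK : 1 ≤ K)
    (hu : Summable (fun j : ℕ => (j:ℝ)^2 * (u j)^2))
    (huL : (∑' j : ℕ, (j:ℝ)^2 * (u j)^2) ≤ L) :
    |∑' j : ℕ, u (j+K)| ≤ a * (∑' j : ℕ, 1/(((j+K:ℕ)):ℝ)^2) + (1/a) * L := by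
  have habs : Summable (fun j : ℕ => |u (j+K)|) :=
    (summable_nat_add_iff (f := fun j : ℕ => |u j|) K).mpr (summable_abs_of_weighted hu)
  have hτ : Summable (fun j : ℕ => 1/(((j+K:ℕ)):ℝ)^2) :=
    (summable_nat_add_iff (f := fun j : ℕ => 1/(j:ℝ)^2) K).mpr summable_inv_sq
  have hw : Summable (fun j : ℕ => (((j+K:ℕ)):ℝ)^2 * (u (j+K))^2) :=
    (summable_nat_add_iff (f := fun j : ℕ => (j:ℝ)^2 * (u j)^2) K).mpr hu
  have h1 : |∑' j : ℕ, u (j+K)| ≤ ∑' j : ℕ, |u (j+K)| := by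
    simpa only [Real.norm_eq_abs] using
      norm_tsum_le_tsum_norm (f := fun j : ℕ => u (j+K)) (by simpa [Real.norm_eq_abs] using habs)
  refine h1.trans ?_
  have h2 : ∑' j : ℕ, |u (j+K)|
      ≤ ∑' j : ℕ, (a * (1/(((j+K:ℕ)):ℝ)^2) + (1/a) * ((((j+K:ℕ)):ℝ)^2 * (u (j+K))^2)) := by
    refine Summable.tsum_le_tsum (fun j => abs_le_amgm ha (hK.trans (Nat.le_add_left K j))) habs ?_
    exact (hτ.mul_left a).add (hw.mul_left (1/a))
  refine h2.trans ?_
  rw [Summable.tsum_add (hτ.mul_left a) (hw.mul_left (1/a)), tsum_mul_left, tsum_mul_left]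
  have h3 : (∑' j : ℕ, (((j+K:ℕ)):ℝ)^2 * (u (j+K))^2) ≤ L := tail_weighted_le K hu huL
  have h4 : (0:ℝ) ≤ 1/a := by positivity
  exact add_le_add le_rfl (mul_le_mul_of_nonneg_left h3 h4)

lemma sumdiff_bound {u v : ℕ → ℝ} {L a δr : ℝ} (ha : 0 < a) (M : ℕ)
    (hu : Summable (fun j : ℕ => (j:ℝ)^2 * (u j)^2))
    (hv : Summable (fun j : ℕ => (j:ℝ)^2 * (v j)^2))
    (huL : (∑' j : ℕ, (j:ℝ)^2 * (u j)^2) ≤ L)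
    (hvL : (∑' j : ℕ, (j:ℝ)^2 * (v j)^2) ≤ L)
    (hδ : ∀ j, |u j - v j| ≤ δr) :
    |(∑' j : ℕ, u j) - (∑' j : ℕ, v j)|
      ≤ ((M:ℝ)+1)*δr + 2*(a*(∑' j : ℕ, 1/(((j+(M+1):ℕ)):ℝ)^2)) + 2*((1/a)*L) := by
  have hU : Summable u := summable_abs_iff.mp (summable_abs_of_weighted hu)
  have hV : Summable v := summable_abs_iff.mp (summable_abs_of_weighted hv)
  have hdu := (Summable.sum_add_tsum_nat_add (M+1) hU).symm
  have hdv := (Summable.sum_add_tsum_nat_add (M+1) hV).symm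
  have hhead : |(∑ i ∈ Finset.range (M+1), u i) - (∑ i ∈ Finset.range (M+1), v i)|
      ≤ ((M:ℝ)+1)*δr := by
    rw [← Finset.sum_sub_distrib]
    refine (Finset.abs_sum_le_sum_abs _ _).trans ?_
    refine (Finset.sum_le_card_nsmul _ _ δr fun j _ => hδ j).trans ?_
    simp [nsmul_eq_mul]
  have htu := tail_abs_le ha (M+1) (by omega) hu huL
  have htv := tail_abs_le ha (M+1) (by omega) hv hvL
  calc |(∑' j : ℕ, u j) - (∑' j : ℕ, v j)|
      = |((∑ i ∈ Finset.range (M+1), u i) - (∑ i ∈ Finset.range (M+1), v i))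
          + ((∑' j : ℕ, u (j+(M+1))) - (∑' j : ℕ, v (j+(M+1))))| := by
        rw [hdu, hdv]; congr 1; ring
    _ ≤ |(∑ i ∈ Finset.range (M+1), u i) - (∑ i ∈ Finset.range (M+1), v i)|
        + (|∑' j : ℕ, u (j+(M+1))| + |∑' j : ℕ, v (j+(M+1))|) := by
        refine (abs_add_le _ _).trans ?_; gcongr; exact abs_sub _ _
    _ ≤ _ := by
        have := add_le_add htu htv
        linarith [this, hhead]

/-- if `sup_{0≤t≤T}‖z^n(t) − z(t)‖₂ → 0` in probability and
`sup_n E[sup_{0≤t≤T} Σ_j j²(z^n_j(t))²] < ∞`, then almost surely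
`sup_{0≤t≤T} Σ_j j²(z_j(t))² < ∞` (so that `Σ_j |z_j(t)| < ∞` for all `t`), and
`sup_{0≤t≤T}|Σ_j z^n_j(t) − Σ_j z_j(t)| → 0` in probability. -/
theorem sum_conv_in_probability {Ω : Type*} [MeasurableSpace Ω] (P : Measure Ω)
    [IsProbabilityMeasure P] (T : ℝ) (hT : 0 < T)
    (zn : ℕ → Ω → ℝ → ℕ → ℝ) (z : Ω → ℝ → ℕ → ℝ)
    (hmeas1 : ∀ n, Measurable (fun ω => supNormDiff T (zn n ω) (z ω)))
    (hmeas2 : ∀ n, Measurable (fun ω => supWeighted T (zn n ω)))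
    (hmeas3 : Measurable (fun ω => supWeighted T (z ω)))
    (hmeas4 : ∀ n, Measurable (fun ω => supSumDiff T (zn n ω) (z ω)))
    (hconv : ∀ ε : ℝ≥0∞, 0 < ε →
      Tendsto (fun n => P {ω | ε ≤ supNormDiff T (zn n ω) (z ω)}) atTop (nhds 0))
    (hbound : ∃ C : ℝ≥0∞, C < ⊤ ∧ ∀ n, (∫⁻ ω, supWeighted T (zn n ω) ∂P) ≤ C) :
    (∀ᵐ ω ∂P, supWeighted T (z ω) < ⊤ ∧
      ∀ t ∈ Set.Icc (0 : ℝ) T, Summable (fun j => |z ω t j|)) ∧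
    (∀ ε : ℝ≥0∞, 0 < ε →
      Tendsto (fun n => P {ω | ε ≤ supSumDiff T (zn n ω) (z ω)}) atTop (nhds 0)) := by
  obtain ⟨C, hCtop, hCb⟩ := hbound
  have hCne : C ≠ ⊤ := hCtop.ne
  -- Markov inequality for the weighted sups
  have markov : ∀ n (lam : ℝ≥0∞), lam ≠ 0 → lam ≠ ⊤ →
      P {ω | lam ≤ supWeighted T (zn n ω)} ≤ C / lam := by
    intro n lam h0 ht
    refine (meas_ge_le_lintegral_div (hmeas2 n).aemeasurable h0 ht).trans ?_
    exact ENNReal.div_le_div_right (hCb n) lam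
  -- existence of a large finite lam
  have exists_lam : ∀ η : ℝ≥0∞, 0 < η → ∃ lam : ℝ≥0∞, lam ≠ 0 ∧ lam ≠ ⊤ ∧ C / lam ≤ η := by
    intro η hη
    rcases eq_or_ne η ⊤ with rfl | hηt
    · exact ⟨1, one_ne_zero, ENNReal.one_ne_top, le_top⟩
    · have hne : C/η + 1 ≠ ⊤ :=
        ENNReal.add_ne_top.mpr ⟨(ENNReal.div_lt_top hCne hη.ne').ne, ENNReal.one_ne_top⟩
      refine ⟨C/η + 1, by simp, hne, ?_⟩
      rw [ENNReal.div_le_iff (by simp) hne, mul_add, mul_one,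
        ENNReal.mul_div_cancel hη.ne' hηt]
      exact le_self_add
  -- Step 2: tail bound for the limit process
  have step2 : ∀ lam : ℝ≥0∞, lam ≠ 0 → lam ≠ ⊤ →
      P {ω | 3*lam ≤ supWeighted T (z ω)} ≤ C / lam := by
    intro lam h0 ht
    set W : ℕ → Ω → ℝ≥0∞ := fun n ω => ⨆ t : Set.Icc (0:ℝ) T,
      ∑ j ∈ Finset.range n, ENNReal.ofReal ((j:ℝ)^2 * (z ω t j)^2) with hW
    have hWsup : ∀ ω, supWeighted T (z ω) = ⨆ n, W n ω := by
      intro ω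
      simp only [supWeighted, hW]
      simp_rw [ENNReal.tsum_eq_iSup_nat]
      exact iSup_comm
    set S : ℕ → Set Ω := fun n => {ω | 2*lam + lam/2 < W n ω} with hS
    have hSmono : Monotone S := by
      intro m n hmn ω hω
      simp only [hS, Set.mem_setOf_eq] at hω ⊢
      refine lt_of_lt_of_le hω (iSup_mono fun t => ?_)
      exact Finset.sum_le_sum_of_subset (Finset.range_subset_range.mpr hmn)
    have h52 : 2*lam + lam/2 < 3*lam := by
      have h1 : lam/2 < lam := ENNReal.half_lt_self h0 ht
      calc 2*lam + lam/2 < 2*lam + lam :=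
            ENNReal.add_lt_add_left (ENNReal.mul_ne_top ENNReal.ofNat_ne_top ht) h1
        _ = 3*lam := by ring
    have hsub : {ω | 3*lam ≤ supWeighted T (z ω)} ⊆ ⋃ n, S n := by
      intro ω hω
      simp only [Set.mem_setOf_eq] at hω
      rw [hWsup ω] at hω
      have h1 : 2*lam + lam/2 < ⨆ n, W n ω := lt_of_lt_of_le h52 hω
      obtain ⟨n, hn⟩ := lt_iSup_iff.mp h1
      exact Set.mem_iUnion.mpr ⟨n, hn⟩
    have hSn : ∀ n, P (S n) ≤ C / lam := by
      intro n
      have hLr : 0 < lam.toReal := ENNReal.toReal_pos h0 ht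
      set d : ℝ := Real.sqrt (lam.toReal / (4*((n:ℝ)^2+1))) with hd
      have hdpos : 0 < d := Real.sqrt_pos.mpr (by positivity)
      have hd2 : d^2 = lam.toReal / (4*((n:ℝ)^2+1)) := Real.sq_sqrt (by positivity)
      set ε₀ : ℝ≥0∞ := (ENNReal.ofReal (d^2)) ^ (1/2:ℝ) with hε₀
      have hε₀pos : 0 < ε₀ :=
        ENNReal.rpow_pos (ENNReal.ofReal_pos.mpr (by positivity)) ENNReal.ofReal_ne_top
      have key : ∀ m, S n ⊆ {ω | ε₀ ≤ supNormDiff T (zn m ω) (z ω)}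
          ∪ {ω | lam ≤ supWeighted T (zn m ω)} := by
        intro m ω hω
        simp only [hS, Set.mem_setOf_eq] at hω
        by_contra hcon
        simp only [Set.mem_union, Set.mem_setOf_eq, not_or, not_le] at hcon
        obtain ⟨hnd, hwb⟩ := hcon
        simp only [supNormDiff] at hnd
        simp only [supWeighted] at hwb
        have hWn : W n ω ≤ 2*lam + lam/2 := by
          refine iSup_le fun t => ?_
          refine (trunc_bound (zn m ω t) (z ω t) n).trans ?_
          have hA : (∑' j : ℕ, ENNReal.ofReal ((j:ℝ)^2 * (zn m ω t j)^2)) ≤ lam := by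
            refine le_of_lt (lt_of_le_of_lt ?_ hwb)
            exact le_iSup (fun s : Set.Icc (0:ℝ) T =>
              ∑' j : ℕ, ENNReal.ofReal ((j:ℝ)^2 * (zn m ω s j)^2)) t
          have hB : (∑' j : ℕ, ENNReal.ofReal ((zn m ω t j - z ω t j)^2))
              ≤ ENNReal.ofReal (d^2) := by
            have h1 : (∑' j : ℕ, ENNReal.ofReal ((zn m ω t j - z ω t j)^2)) ^ (1/2:ℝ) < ε₀ :=
              lt_of_le_of_lt (le_iSup (fun s : Set.Icc (0:ℝ) T =>
                (∑' j : ℕ, ENNReal.ofReal ((zn m ω s j - z ω s j)^2)) ^ (1/2:ℝ)) t) hnd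
            rw [hε₀] at h1
            exact ((ENNReal.rpow_lt_rpow_iff (by norm_num : (0:ℝ) < 1/2)).mp h1).le
          calc 2 * (∑' j : ℕ, ENNReal.ofReal ((j:ℝ)^2 * (zn m ω t j)^2))
              + ENNReal.ofReal (2*(n:ℝ)^2)
                * (∑' j : ℕ, ENNReal.ofReal ((zn m ω t j - z ω t j)^2))
              ≤ 2 * lam + ENNReal.ofReal (2*(n:ℝ)^2) * ENNReal.ofReal (d^2) :=
                add_le_add (mul_le_mul_right hA 2) (mul_le_mul_right hB _)
            _ ≤ 2*lam + lam/2 := by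
                refine add_le_add le_rfl ?_
                rw [← ENNReal.ofReal_mul (by positivity)]
                have hr : 2*(n:ℝ)^2 * d^2 ≤ lam.toReal/2 := by
                  rw [hd2, mul_comm, div_mul_eq_mul_div,
                    div_le_div_iff₀ (by positivity) (by norm_num : (0:ℝ) < 2)]
                  nlinarith [mul_nonneg hLr.le (sq_nonneg (n:ℝ))]
                refine (ENNReal.ofReal_le_ofReal hr).trans ?_
                rw [ENNReal.ofReal_div_of_pos (by norm_num : (0:ℝ) < 2),
                  ENNReal.ofReal_toReal ht, ENNReal.ofReal_ofNat]
        exact absurd hω (not_lt.mpr hWn)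
      have hlim : Tendsto (fun m => P {ω | ε₀ ≤ supNormDiff T (zn m ω) (z ω)} + C/lam)
          atTop (𝓝 (0 + C/lam)) := (hconv ε₀ hε₀pos).add tendsto_const_nhds
      rw [zero_add] at hlim
      refine ge_of_tendsto' hlim fun m => ?_
      refine (measure_mono (key m)).trans ?_
      exact (measure_union_le _ _).trans (add_le_add le_rfl (markov m lam h0 ht))
    calc P {ω | 3*lam ≤ supWeighted T (z ω)} ≤ P (⋃ n, S n) := measure_mono hsub
      _ = ⨆ n, P (S n) := hSmono.measure_iUnion
      _ ≤ C / lam := iSup_le hSn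
  -- a.s. finiteness
  have hfin : P {ω | supWeighted T (z ω) = ⊤} = 0 := by
    have hb : ∀ lam : ℝ≥0∞, lam ≠ 0 → lam ≠ ⊤ →
        P {ω | supWeighted T (z ω) = ⊤} ≤ C / lam := by
      intro lam h0 ht
      refine (measure_mono ?_).trans (step2 lam h0 ht)
      intro ω hω
      simp only [Set.mem_setOf_eq] at hω ⊢
      rw [hω]; exact le_top
    refine le_antisymm (ENNReal.le_of_forall_pos_le_add fun δ hδ _ => ?_) zero_le
    obtain ⟨lam, h0, ht, hle⟩ := exists_lam (δ : ℝ≥0∞) (ENNReal.coe_pos.mpr hδ)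
    rw [zero_add]
    exact (hb lam h0 ht).trans hle
  have haefin : ∀ᵐ ω ∂P, supWeighted T (z ω) < ⊤ := by
    rw [ae_iff]
    refine measure_mono_null ?_ hfin
    intro ω hω
    simp only [Set.mem_setOf_eq, not_lt, top_le_iff] at hω
    exact hω
  constructor
  · refine haefin.mono fun ω hω => ⟨hω, fun t ht => ?_⟩
    have h1 : (∑' j : ℕ, ENNReal.ofReal ((j:ℝ)^2 * (z ω t j)^2)) ≤ supWeighted T (z ω) :=
      le_iSup (fun s : Set.Icc (0:ℝ) T =>
        ∑' j : ℕ, ENNReal.ofReal ((j:ℝ)^2 * (z ω s j)^2)) ⟨t, ht⟩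
    have h2 : Summable (fun j : ℕ => (j:ℝ)^2 * (z ω t j)^2) :=
      summable_of_tsum_ofReal_ne_top (fun j => by positivity) (lt_of_le_of_lt h1 hω).ne
    exact summable_abs_of_weighted h2
  · intro ε hε
    rw [ENNReal.tendsto_nhds_zero]
    intro η hη
    set ε' := min ε 1 with hε'def
    have hε'pos : 0 < ε' := lt_min hε one_pos
    have hε'top : ε' ≠ ⊤ := ((min_le_right ε 1).trans_lt ENNReal.one_lt_top).ne
    set εr := ε'.toReal with hεrdef
    have hεrpos : 0 < εr := ENNReal.toReal_pos hε'pos.ne' hε'top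
    have hη2 : (0:ℝ≥0∞) < η/2 := ENNReal.div_pos hη.ne' ENNReal.ofNat_ne_top
    have hη4 : (0:ℝ≥0∞) < η/2/2 := ENNReal.div_pos hη2.ne' ENNReal.ofNat_ne_top
    obtain ⟨lam, hlam0, hlamt, hlamle⟩ := exists_lam (η/2/2) hη4
    have h3lamt : 3*lam ≠ ⊤ := ENNReal.mul_ne_top (by norm_num) hlamt
    set L := (3*lam).toReal with hL
    have hLnn : 0 ≤ L := ENNReal.toReal_nonneg
    set a := 8*L/εr + 1 with ha
    have hapos : 0 < a := by
      have h8 : 0 ≤ 8*L/εr := div_nonneg (by positivity) hεrpos.le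
      rw [ha]; linarith
    have h2La : 2*((1/a)*L) ≤ εr/4 := by
      have hkey : εr*a = 8*L + εr := by rw [ha]; field_simp
      rw [show 2*((1/a)*L) = (8*L)/(4*a) by field_simp; ring,
        div_le_div_iff₀ (by positivity) (by norm_num : (0:ℝ) < 4)]
      nlinarith [hkey, hεrpos, hLnn]
    have htail1 : Tendsto (fun M : ℕ => ∑' j : ℕ, 1/(((j+(M+1):ℕ)):ℝ)^2) atTop (𝓝 0) :=
      (tendsto_sum_nat_add (fun j : ℕ => 1/(j:ℝ)^2)).comp (tendsto_add_atTop_nat 1)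
    have htail : Tendsto (fun M : ℕ => 2*(a * ∑' j : ℕ, 1/(((j+(M+1):ℕ)):ℝ)^2))
        atTop (𝓝 0) := by
      have h1 := (htail1.const_mul a).const_mul (2:ℝ)
      simpa using h1
    obtain ⟨M, hM⟩ :=
      (htail.eventually (eventually_le_nhds (by positivity : (0:ℝ) < εr/4))).exists
    set δr := εr/(4*((M:ℝ)+1)) with hδr
    have hδrpos : 0 < δr := by positivity
    set ε₀ : ℝ≥0∞ := (ENNReal.ofReal (δr^2)) ^ (1/2:ℝ) with hε₀
    have hε₀pos : 0 < ε₀ :=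
      ENNReal.rpow_pos (ENNReal.ofReal_pos.mpr (by positivity)) ENNReal.ofReal_ne_top
    have hlam3 : lam ≤ 3*lam := by
      calc lam = 1*lam := (one_mul lam).symm
        _ ≤ 3*lam := mul_le_mul_left (by norm_num) lam
    have key : ∀ n, {ω | ε ≤ supSumDiff T (zn n ω) (z ω)}
        ⊆ {ω | ε₀ ≤ supNormDiff T (zn n ω) (z ω)}
          ∪ ({ω | lam ≤ supWeighted T (zn n ω)} ∪ {ω | 3*lam ≤ supWeighted T (z ω)}) := by
      intro n ω hω
      simp only [Set.mem_setOf_eq] at hω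
      by_contra hcon
      simp only [Set.mem_union, Set.mem_setOf_eq, not_or, not_le] at hcon
      obtain ⟨hnd, hwn, hwz⟩ := hcon
      simp only [supNormDiff] at hnd
      simp only [supWeighted] at hwn hwz
      have hbound_t : ∀ t : Set.Icc (0:ℝ) T,
          |(∑' j : ℕ, zn n ω t j) - (∑' j : ℕ, z ω t j)| ≤ εr/4 + εr/4 + εr/4 := by
        intro t
        have hAle : (∑' j : ℕ, ENNReal.ofReal ((j:ℝ)^2 * (zn n ω t j)^2)) < lam :=
          lt_of_le_of_lt (le_iSup (fun s : Set.Icc (0:ℝ) T =>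
            ∑' j : ℕ, ENNReal.ofReal ((j:ℝ)^2 * (zn n ω s j)^2)) t) hwn
        have hBle : (∑' j : ℕ, ENNReal.ofReal ((j:ℝ)^2 * (z ω t j)^2)) < 3*lam :=
          lt_of_le_of_lt (le_iSup (fun s : Set.Icc (0:ℝ) T =>
            ∑' j : ℕ, ENNReal.ofReal ((j:ℝ)^2 * (z ω s j)^2)) t) hwz
        have hu : Summable (fun j : ℕ => (j:ℝ)^2 * (zn n ω t j)^2) :=
          summable_of_tsum_ofReal_ne_top (fun j => by positivity)
            (hAle.trans hlamt.lt_top).ne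
        have hv : Summable (fun j : ℕ => (j:ℝ)^2 * (z ω t j)^2) :=
          summable_of_tsum_ofReal_ne_top (fun j => by positivity)
            (hBle.trans h3lamt.lt_top).ne
        have huL : (∑' j : ℕ, (j:ℝ)^2 * (zn n ω t j)^2) ≤ L :=
          tsum_le_toReal (fun j => by positivity) h3lamt (hAle.le.trans hlam3)
        have hvL : (∑' j : ℕ, (j:ℝ)^2 * (z ω t j)^2) ≤ L :=
          tsum_le_toReal (fun j => by positivity) h3lamt hBle.le
        have hδj : ∀ j, |zn n ω t j - z ω t j| ≤ δr := by
          intro j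
          have h1 : (∑' j : ℕ, ENNReal.ofReal ((zn n ω t j - z ω t j)^2)) ^ (1/2:ℝ) < ε₀ :=
            lt_of_le_of_lt (le_iSup (fun s : Set.Icc (0:ℝ) T =>
              (∑' j : ℕ, ENNReal.ofReal ((zn n ω s j - z ω s j)^2)) ^ (1/2:ℝ)) t) hnd
          rw [hε₀] at h1
          have h2 : (∑' j : ℕ, ENNReal.ofReal ((zn n ω t j - z ω t j)^2))
              ≤ ENNReal.ofReal (δr^2) :=
            ((ENNReal.rpow_lt_rpow_iff (by norm_num : (0:ℝ) < 1/2)).mp h1).le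
          have h3 : ENNReal.ofReal ((zn n ω t j - z ω t j)^2) ≤ ENNReal.ofReal (δr^2) :=
            (ENNReal.le_tsum j).trans h2
          have h4 : (zn n ω t j - z ω t j)^2 ≤ δr^2 :=
            (ENNReal.ofReal_le_ofReal_iff (by positivity)).mp h3
          calc |zn n ω t j - z ω t j| = Real.sqrt ((zn n ω t j - z ω t j)^2) :=
              (Real.sqrt_sq_eq_abs _).symm
            _ ≤ Real.sqrt (δr^2) := Real.sqrt_le_sqrt h4
            _ = δr := Real.sqrt_sq hδrpos.le
        have hsd := sumdiff_bound hapos M hu hv huL hvL hδj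
        refine hsd.trans ?_
        have hhead : ((M:ℝ)+1)*δr = εr/4 := by
          rw [hδr]; field_simp
        linarith [hM, h2La]
      have hlt : supSumDiff T (zn n ω) (z ω) < ε' := by
        have hsup : supSumDiff T (zn n ω) (z ω) ≤ ENNReal.ofReal (εr/4+εr/4+εr/4) := by
          simp only [supSumDiff]
          exact iSup_le fun t => ENNReal.ofReal_le_ofReal (hbound_t t)
        refine lt_of_le_of_lt hsup ?_
        have heq : ENNReal.ofReal εr = ε' := ENNReal.ofReal_toReal hε'top
        rw [← heq]
        exact (ENNReal.ofReal_lt_ofReal_iff hεrpos).mpr (by linarith)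
      exact absurd hω (not_le.mpr (hlt.trans_le (min_le_left ε 1)))
    have hPz : P {ω | 3*lam ≤ supWeighted T (z ω)} ≤ η/2/2 :=
      (step2 lam hlam0 hlamt).trans hlamle
    have hev : ∀ᶠ n in atTop, P {ω | ε₀ ≤ supNormDiff T (zn n ω) (z ω)} ≤ η/2 :=
      (ENNReal.tendsto_nhds_zero.mp (hconv ε₀ hε₀pos)) (η/2) hη2
    filter_upwards [hev] with n hn
    calc P {ω | ε ≤ supSumDiff T (zn n ω) (z ω)}
        ≤ P ({ω | ε₀ ≤ supNormDiff T (zn n ω) (z ω)}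
          ∪ ({ω | lam ≤ supWeighted T (zn n ω)} ∪ {ω | 3*lam ≤ supWeighted T (z ω)})) :=
          measure_mono (key n)
      _ ≤ P {ω | ε₀ ≤ supNormDiff T (zn n ω) (z ω)}
          + P ({ω | lam ≤ supWeighted T (zn n ω)} ∪ {ω | 3*lam ≤ supWeighted T (z ω)}) :=
          measure_union_le _ _
      _ ≤ η/2 + (P {ω | lam ≤ supWeighted T (zn n ω)}
          + P {ω | 3*lam ≤ supWeighted T (z ω)}) :=
          add_le_add hn (measure_union_le _ _)
      _ ≤ η/2 + (η/2/2 + η/2/2) :=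
          add_le_add le_rfl (add_le_add ((markov n lam hlam0 hlamt).trans hlamle) hPz)
      _ = η := by rw [ENNReal.add_halves, ENNReal.add_halves]
end
end
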